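/- arXiv:2405.03112 — 6 statements merged into one kernel-verified Lean document; each statement's English description precedes it below -/
import Mathlib

section
/- For every integer k ≥ 2, every finite color set T, every k-vertex T-edge-colored complete graph R, and every integer n ≥ k, one has I(R,n) ≥ (k!/(k^k − k))·binom(n,k). In particular the inducibility of R is at least k!/(k^k − k), as witnessed by iterated balanced blow-ups of R. -/
open Finset Filter

open scoped Classical

section Defs

variable {T : Type}

/-- A coloring of the complete graph is symmetric. -/
def IsSym {V : Type} (χ : V → V → T) : Prop := ∀ u v, χ u v = χ v u

/-- `copyCount k n R χ` : the number of `k`-element subsets of `Fin n` whose coloring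
induced by `χ` is isomorphic (as an edge-colored complete graph) to `R`. -/
noncomputable def copyCount (k n : ℕ) (R : Fin k → Fin k → T) (χ : Fin n → Fin n → T) : ℕ :=
  ((Finset.powersetCard k (Finset.univ : Finset (Fin n))).filter
    (fun S => ∃ φ : Fin k → Fin n, Function.Injective φ ∧ (∀ a, φ a ∈ S) ∧
      ∀ a b : Fin k, a ≠ b → χ (φ a) (φ b) = R a b)).card

/-- `maxCopyCount k n R = I(R,n)` : the maximum of `copyCount` over all symmetric
`T`-colorings of the complete graph on `n` vertices. -/
noncomputable def maxCopyCount [Fintype T] (k n : ℕ) (R : Fin k → Fin k → T) : ℕ :=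
  Finset.sup ((Finset.univ : Finset (Fin n → Fin n → T)).filter (fun χ => IsSym χ))
    (fun χ => copyCount k n R χ)

/-- `vertDeg k n R χ x = d(x)` : the number of `k`-subsets containing `x` whose induced
coloring is isomorphic to `R`. -/
noncomputable def vertDeg (k n : ℕ) (R : Fin k → Fin k → T) (χ : Fin n → Fin n → T)
    (x : Fin n) : ℕ :=
  ((Finset.powersetCard k (Finset.univ : Finset (Fin n))).filter
    (fun S => x ∈ S ∧ ∃ φ : Fin k → Fin n, Function.Injective φ ∧ (∀ a, φ a ∈ S) ∧
      ∀ a b : Fin k, a ≠ b → χ (φ a) (φ b) = R a b)).card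

/-- `embCount k n R χ i x = d_i(x)` : the number of injective color-preserving maps
`φ : Fin k → Fin n` with `φ i = x`. -/
noncomputable def embCount (k n : ℕ) (R : Fin k → Fin k → T) (χ : Fin n → Fin n → T)
    (i : Fin k) (x : Fin n) : ℕ :=
  ((Finset.univ : Finset (Fin k → Fin n)).filter
    (fun φ => Function.Injective φ ∧ φ i = x ∧
      ∀ a b : Fin k, a ≠ b → χ (φ a) (φ b) = R a b)).card

/-- `Nset k n R χ i x = N_i(x)` : the set of vertices `y ≠ x` lying in the image of some
injective color-preserving map `φ : Fin k → Fin n` with `φ i = x`. -/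
noncomputable def Nset (k n : ℕ) (R : Fin k → Fin k → T) (χ : Fin n → Fin n → T)
    (i : Fin k) (x : Fin n) : Finset (Fin n) :=
  (Finset.univ : Finset (Fin n)).filter
    (fun y => y ≠ x ∧ ∃ φ : Fin k → Fin n, Function.Injective φ ∧ φ i = x ∧
      (∀ a b : Fin k, a ≠ b → χ (φ a) (φ b) = R a b) ∧ ∃ a, φ a = y)

/-- `colorDeg χ x c = d_c(x)` : the number of vertices `y ≠ x` with `χ x y = c`. -/
noncomputable def colorDeg {n : ℕ} (χ : Fin n → Fin n → T) (x : Fin n) (c : T) : ℕ :=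
  ((Finset.univ : Finset (Fin n)).filter (fun y => y ≠ x ∧ χ x y = c)).card

end Defs

/-- The rainbow `k`-clique: the edge `ij` gets color `{i,j}`. -/
def rainbowClique (k : ℕ) : Fin k → Fin k → Finset (Fin k) := fun i j => {i, j}

/-- A rainbow graph `G` on `[k]`, viewed as an edge-colored complete graph: edges `ij ∈ E`
get color `{i,j}`, non-edges get color `∅`. -/
noncomputable def rainbowOf {k : ℕ} (G : SimpleGraph (Fin k)) :
    Fin k → Fin k → Finset (Fin k) :=
  fun i j => if G.Adj i j then {i, j} else ∅

/-- `B(x)` : the set of neighbors of `x`, i.e. vertices joined to `x` by a non-`∅` color. -/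
noncomputable def Bset {k n : ℕ} (χ : Fin n → Fin n → Finset (Fin k)) (x : Fin n) :
    Finset (Fin n) :=
  (Finset.univ : Finset (Fin n)).filter (fun y => y ≠ x ∧ χ x y ≠ ∅)

/-- The degree of vertex `i` in the graph `G`. -/
noncomputable def degR {k : ℕ} (G : SimpleGraph (Fin k)) (i : Fin k) : ℕ :=
  ((Finset.univ : Finset (Fin k)).filter (fun j => G.Adj i j)).card

/-!
Color `ℕ` by the iterated balanced blow-up of `R`: two distinct numbers get the `R`-color of
their lowest differing base-`k` digits. On `{0, …, n - 1}` the residue classes mod `k` are `k`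
parts of sizes `mᵢ ∈ {⌊n/k⌋, ⌊n/k⌋ + 1}`, the parts are joined as in `R`, and inside part `i`
(via `t ↦ i + t k`) the coloring is the same construction on `{0, …, mᵢ - 1}`. So the number
`c(n)` of copies of `R` satisfies `c(n) ≥ ∏ mᵢ + ∑ c(mᵢ)` (transversals, and copies inside a part).
Sorting the injections `[k] → [n]` by their pattern of residues, the `k` constant patterns
contribute `∑ mᵢ^(k)` and, by balancedness, each of the other `k^k - k` patterns at most `∏ mᵢ`.
By induction `n^(k) ≤ (k^k - k) c(n)`, which is `k! binom(n, k) ≤ (k^k - k) c(n)`.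
-/

theorem Nat.descFactorial_mul_le_mul_pow {q m : ℕ} (hqm : q ≤ m) (hmq : m ≤ q + 1) (c : ℕ) :
    m.descFactorial c * q ≤ m * q ^ c := by
  rcases c with _ | c
  · simpa using hqm
  rcases m with _ | m
  · simp
  calc (m + 1).descFactorial (c + 1) * q = (m + 1) * m.descFactorial c * q := by
        rw [Nat.succ_descFactorial_succ]
    _ ≤ (m + 1) * m ^ c * q := by gcongr; exact Nat.descFactorial_le_pow m c
    _ ≤ (m + 1) * q ^ (c + 1) := by
        rw [pow_succ, ← mul_assoc]; gcongr; omega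

theorem prod_descFactorial_le_prod {ι : Type*} [Fintype ι] {q : ℕ} (hq : 0 < q) {m : ι → ℕ}
    (hm : ∀ i, m i ∈ Set.Icc q (q + 1)) {c : ι → ℕ} (hc : ∑ i, c i = Fintype.card ι) :
    ∏ i, (m i).descFactorial (c i) ≤ ∏ i, m i := by
  have h : (∏ i, (m i).descFactorial (c i)) * q ^ Fintype.card ι ≤
      (∏ i, m i) * q ^ Fintype.card ι := by
    calc (∏ i, (m i).descFactorial (c i)) * q ^ Fintype.card ι
        = ∏ i, (m i).descFactorial (c i) * q := by
          rw [Finset.prod_mul_distrib, Finset.prod_const, Finset.card_univ]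
      _ ≤ ∏ i, m i * q ^ c i :=
          Finset.prod_le_prod' fun i _ => Nat.descFactorial_mul_le_mul_pow (hm i).1 (hm i).2 _
      _ = (∏ i, m i) * q ^ Fintype.card ι := by
          rw [Finset.prod_mul_distrib, Finset.prod_pow_eq_pow_sum, hc]
  exact Nat.le_of_mul_le_mul_right h (by positivity)

theorem card_embedding_le_sum_prod {α V β : Type*} [Fintype α] [DecidableEq α] [Fintype V]
    [Fintype β] [DecidableEq β] (f : V → β) :
    Fintype.card (α ↪ V) ≤
      ∑ p : α → β, ∏ b, (#{v | f v = b}).descFactorial #{a | p a = b} := by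
  let toFibers (φ : α ↪ V) : Σ p : α → β, ∀ b, {a // p a = b} ↪ {v // f v = b} :=
    ⟨f ∘ φ, fun _ => ⟨fun a => ⟨φ a, a.2⟩, fun a a' h => Subtype.ext (φ.injective congr($h.1))⟩⟩
  let ofFibers (x : Σ p : α → β, ∀ b, {a // p a = b} ↪ {v // f v = b}) (a : α) : V :=
    x.2 (x.1 a) ⟨a, rfl⟩
  have h : Function.Injective toFibers := fun φ φ' h =>
    DFunLike.coe_injective (congrArg ofFibers h : _)
  refine (Fintype.card_le_of_injective _ h).trans_eq ?_
  simp only [Fintype.card_sigma, Fintype.card_pi, Fintype.card_embedding_eq,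
    Fintype.card_subtype]

theorem sum_le_sub_mul_add_sum_const {α β : Type*} [Fintype α] [DecidableEq α] [Nonempty α]
    [Fintype β] (g : (α → β) → ℕ) {M : ℕ} (hg : ∀ p, g p ≤ M) :
    ∑ p, g p ≤ (Fintype.card β ^ Fintype.card α - Fintype.card β) * M +
      ∑ b, g (Function.const α b) := by
  set consts : Finset (α → β) := univ.image (Function.const α)
  have hconsts : #consts = Fintype.card β := by
    rw [card_image_of_injective _ (Function.const_injective), card_univ]
  rw [← sum_compl_add_sum consts, sum_image fun _ _ _ _ h => Function.const_injective h]
  gcongr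
  calc ∑ p ∈ constsᶜ, g p ≤ #constsᶜ * M := sum_le_card_nsmul _ _ _ fun p _ => hg p
    _ = _ := by rw [card_compl, hconsts, Fintype.card_fun]

section Blocks

variable {k n : ℕ}

/-- `⌈(n - i) / k⌉`, the number of `x < n` with `x % k = i` when `i < k`. -/
def blockSize (k n i : ℕ) : ℕ := (n + k - 1 - i) / k

theorem blockSize_mem_Icc {i : ℕ} (hi : i < k) :
    blockSize k n i ∈ Set.Icc (n / k) (n / k + 1) := by
  have hk : 0 < k := by omega
  constructor
  · exact Nat.div_le_div_right (by omega)
  · rw [← Nat.add_div_right n hk]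
    exact Nat.div_le_div_right (by omega)

theorem blockSize_lt {i : ℕ} (hk : 1 < k) (hn : k ≤ n) : blockSize k n i < n := by
  rw [blockSize, Nat.div_lt_iff_lt_mul (by omega)]
  have := Nat.mul_le_mul_left n hk
  omega

variable [NeZero k]

theorem add_mul_lt_iff_lt_blockSize {i t : ℕ} : i + t * k < n ↔ t < blockSize k n i := by
  rw [blockSize, Nat.lt_iff_add_one_le (m := t), Nat.le_div_iff_mul_le (NeZero.pos k), add_mul,
    one_mul]
  have := NeZero.pos k
  omega

variable (k) in
def residue (x : Fin n) : Fin k := ⟨x % k, Nat.mod_lt _ (NeZero.pos k)⟩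

variable (n) in
def blockEmb (i : Fin k) : Fin (blockSize k n i) ↪ Fin n where
  toFun t := ⟨i + t * k, add_mul_lt_iff_lt_blockSize.2 t.2⟩
  inj' t s h :=
    Fin.ext (Nat.eq_of_mul_eq_mul_right (NeZero.pos k) (by simpa using congr(($h : ℕ))))

theorem blockEmb_val (i : Fin k) (t : Fin (blockSize k n i)) :
    (blockEmb n i t : ℕ) = i + t * k := rfl

theorem blockEmb_mod (i : Fin k) (t : Fin (blockSize k n i)) :
    (blockEmb n i t : ℕ) % k = i := by
  rw [blockEmb_val, Nat.add_mul_mod_self_right, Nat.mod_eq_of_lt i.2]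

theorem residue_blockEmb (i : Fin k) (t : Fin (blockSize k n i)) :
    residue k (blockEmb n i t) = i :=
  Fin.ext (blockEmb_mod i t)

theorem div_blockEmb (i : Fin k) (t : Fin (blockSize k n i)) :
    (blockEmb n i t : ℕ) / k = t := by
  rw [blockEmb_val, Nat.add_mul_div_right _ _ (NeZero.pos k), Nat.div_eq_of_lt i.2, zero_add]

theorem card_residue_eq (i : Fin k) :
    #{x : Fin n | residue k x = i} = blockSize k n i := by
  suffices h : ({x : Fin n | residue k x = i} : Finset _) = univ.map (blockEmb n i) by
    rw [h, card_map, card_univ, Fintype.card_fin]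
  ext x
  simp only [mem_filter, mem_univ, true_and, Finset.mem_map]
  constructor
  · rintro rfl
    have hx : ((residue k x : Fin k) : ℕ) + x / k * k < n := by
      rw [residue, Nat.mod_add_div']; exact x.2
    exact ⟨⟨x / k, add_mul_lt_iff_lt_blockSize.1 hx⟩, Fin.ext (Nat.mod_add_div' x k)⟩
  · rintro ⟨t, -, rfl⟩
    exact residue_blockEmb i t

theorem image_residue_map_blockEmb (i : Fin k)
    {S : Finset (Fin (blockSize k n i))} (hS : S.Nonempty) :
    (S.map (blockEmb n i)).image (residue k) = {i} := by
  rw [map_eq_image, image_image, ← image_const hS i]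
  exact image_congr fun t _ => residue_blockEmb i t

end Blocks

section Coloring

variable {T : Type} {k : ℕ}

theorem div_add_div_lt_add_of_ne (hk : 1 < k) {x y : ℕ} (hxy : x ≠ y) :
    x / k + y / k < x + y := by
  rcases Nat.eq_zero_or_pos x with rfl | hx
  · have := Nat.div_lt_self (Nat.pos_of_ne_zero hxy.symm) hk
    simpa using this
  · have := Nat.div_lt_self hx hk
    have := Nat.div_le_self y k
    omega

variable (hk : 1 < k)

def iterBlowUp (R : Fin k → Fin k → T) (x y : ℕ) : T :=
  if h : x % k = y % k ∧ x ≠ y then iterBlowUp R (x / k) (y / k)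
  else R ⟨x % k, Nat.mod_lt _ (by omega)⟩ ⟨y % k, Nat.mod_lt _ (by omega)⟩
termination_by x + y
decreasing_by exact div_add_div_lt_add_of_ne hk h.2

variable (R : Fin k → Fin k → T) {x y : ℕ}

theorem iterBlowUp_of_mod_ne (h : x % k ≠ y % k) :
    iterBlowUp hk R x y =
      R ⟨x % k, Nat.mod_lt _ (by omega)⟩ ⟨y % k, Nat.mod_lt _ (by omega)⟩ := by
  rw [iterBlowUp, dif_neg (by tauto)]

theorem iterBlowUp_of_mod_eq (h : x % k = y % k) (hxy : x ≠ y) :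
    iterBlowUp hk R x y = iterBlowUp hk R (x / k) (y / k) := by
  rw [iterBlowUp, dif_pos ⟨h, hxy⟩]

variable {R} in
theorem iterBlowUp_comm (hR : IsSym R) (x y : ℕ) : iterBlowUp hk R x y = iterBlowUp hk R y x := by
  fun_induction iterBlowUp hk R x y with
  | case1 x y h ih => rw [ih, iterBlowUp_of_mod_eq hk R h.1.symm h.2.symm]
  | case2 x y h =>
    rw [iterBlowUp, dif_neg fun h' => h ⟨h'.1.symm, h'.2.symm⟩]
    exact hR _ _

end Coloring

section Copies

variable {T : Type} {k : ℕ} (R : Fin k → Fin k → T)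

noncomputable def copies {n : ℕ} (χ : Fin n → Fin n → T) : Finset (Finset (Fin n)) :=
  {S ∈ powersetCard k univ | ∃ φ : Fin k → Fin n, Function.Injective φ ∧ (∀ a, φ a ∈ S) ∧
    ∀ a b : Fin k, a ≠ b → χ (φ a) (φ b) = R a b}

theorem card_copies {n : ℕ} (χ : Fin n → Fin n → T) : #(copies R χ) = copyCount k n R χ := rfl

theorem map_mem_copies {m n : ℕ} {χ : Fin m → Fin m → T} {χ' : Fin n → Fin n → T}
    (e : Fin m ↪ Fin n) (he : ∀ a b, a ≠ b → χ' (e a) (e b) = χ a b) {S : Finset (Fin m)}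
    (hS : S ∈ copies R χ) : S.map e ∈ copies R χ' := by
  simp only [copies, mem_filter, mem_powersetCard, subset_univ, true_and, card_map] at hS ⊢
  obtain ⟨hSk, φ, hφ, hφS, hφR⟩ := hS
  exact ⟨hSk, e ∘ φ, e.injective.comp hφ, fun a => mem_map_of_mem e (hφS a),
    fun a b hab => (he _ _ (hφ.ne hab)).trans (hφR a b hab)⟩

theorem univ_mem_copies_self : (univ : Finset (Fin k)) ∈ copies R R := by
  simp only [copies, mem_filter, mem_powersetCard, subset_univ, true_and, card_univ,
    Fintype.card_fin]
  exact ⟨id, Function.injective_id, fun a => mem_univ a, fun _ _ _ => rfl⟩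

theorem copyCount_le_maxCopyCount [Fintype T] {n : ℕ} {χ : Fin n → Fin n → T} (hχ : IsSym χ) :
    copyCount k n R χ ≤ maxCopyCount k n R :=
  le_sup (f := fun χ => copyCount k n R χ) (by simpa using hχ)

end Copies

section Transversal

variable {k : ℕ} [NeZero k] {n : ℕ}

def transversal (τ : ∀ i : Fin k, Fin (blockSize k n i)) : Fin k ↪ Fin n :=
  ⟨fun i => blockEmb n i (τ i),
    Function.LeftInverse.injective (g := residue k) fun i => residue_blockEmb i (τ i)⟩

theorem transversal_mod (τ : ∀ i : Fin k, Fin (blockSize k n i)) (i : Fin k) :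
    (transversal τ i : ℕ) % k = i :=
  blockEmb_mod i (τ i)

theorem image_residue_map_transversal (τ : ∀ i : Fin k, Fin (blockSize k n i)) :
    (univ.map (transversal τ)).image (residue k) = univ := by
  ext i
  simpa using ⟨i, residue_blockEmb i (τ i)⟩

theorem map_transversal_injective : Function.Injective
    fun τ : ∀ i : Fin k, Fin (blockSize k n i) => univ.map (transversal τ) := by
  intro τ τ' (h : univ.map (transversal τ) = univ.map (transversal τ'))
  funext i
  obtain ⟨j, -, hj⟩ := Finset.mem_map.1 (h ▸ mem_map_of_mem (transversal τ) (mem_univ i))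
  obtain rfl : j = i := by simpa [transversal, residue_blockEmb] using congrArg (residue k) hj
  exact ((blockEmb n j).injective hj).symm

variable (k n)

noncomputable def transversalCopies : Finset (Finset (Fin n)) :=
  univ.image fun τ : ∀ i : Fin k, Fin (blockSize k n i) => univ.map (transversal τ)

theorem card_transversalCopies : #(transversalCopies k n) = ∏ i : Fin k, blockSize k n i := by
  rw [transversalCopies, card_image_of_injective _ map_transversal_injective, card_univ,
    Fintype.card_pi]
  simp only [Fintype.card_fin]

variable {k n}

theorem image_residue_of_mem_transversalCopies {S : Finset (Fin n)}
    (hS : S ∈ transversalCopies k n) : S.image (residue k) = univ := by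
  obtain ⟨τ, -, rfl⟩ := mem_image.1 hS
  exact image_residue_map_transversal τ

end Transversal

section BlowUpColoring

variable {T : Type} {k : ℕ} (hk : 1 < k) (R : Fin k → Fin k → T)

def blowUpColoring (n : ℕ) : Fin n → Fin n → T := fun x y => iterBlowUp hk R x y

theorem isSym_blowUpColoring {R : Fin k → Fin k → T} (hR : IsSym R) (n : ℕ) :
    IsSym (blowUpColoring hk R n) :=
  fun x y => iterBlowUp_comm hk hR x y

variable [NeZero k] {n : ℕ}

theorem blowUpColoring_transversal (τ : ∀ i : Fin k, Fin (blockSize k n i)) {a b : Fin k}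
    (hab : a ≠ b) : blowUpColoring hk R n (transversal τ a) (transversal τ b) = R a b := by
  rw [blowUpColoring, iterBlowUp_of_mod_ne hk R
    (by rw [transversal_mod, transversal_mod]; exact Fin.val_ne_of_ne hab)]
  congr 1 <;> exact Fin.ext (transversal_mod τ _)

theorem blowUpColoring_blockEmb (i : Fin k) {t s : Fin (blockSize k n i)} (hts : t ≠ s) :
    blowUpColoring hk R n (blockEmb n i t) (blockEmb n i s) =
      blowUpColoring hk R (blockSize k n i) t s := by
  rw [blowUpColoring, iterBlowUp_of_mod_eq hk R (by rw [blockEmb_mod, blockEmb_mod])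
    (Fin.val_injective.ne ((blockEmb n i).injective.ne hts)), div_blockEmb, div_blockEmb]
  rfl

theorem transversalCopies_subset :
    transversalCopies k n ⊆ copies R (blowUpColoring hk R n) := by
  simp only [transversalCopies, image_subset_iff, mem_univ, forall_const]
  exact fun τ => map_mem_copies R (transversal τ)
    (fun a b hab => blowUpColoring_transversal hk R τ hab) (univ_mem_copies_self R)

variable (n)

noncomputable def blockCopies (i : Fin k) : Finset (Finset (Fin n)) :=
  (copies R (blowUpColoring hk R (blockSize k n i))).image (map (blockEmb n i))

theorem card_blockCopies (i : Fin k) :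
    #(blockCopies hk R n i) = copyCount k (blockSize k n i) R (blowUpColoring hk R _) :=
  card_image_of_injective _ (map_injective _)

theorem blockCopies_subset (i : Fin k) :
    blockCopies hk R n i ⊆ copies R (blowUpColoring hk R n) := by
  simp only [blockCopies, image_subset_iff]
  exact fun S hS => map_mem_copies R (blockEmb n i)
    (fun t s hts => blowUpColoring_blockEmb hk R i hts) hS

variable {n}

theorem image_residue_of_mem_blockCopies {i : Fin k} {S : Finset (Fin n)}
    (hS : S ∈ blockCopies hk R n i) : S.image (residue k) = {i} := by
  obtain ⟨S₀, hS₀, rfl⟩ := mem_image.1 hS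
  refine image_residue_map_blockEmb i (card_pos.1 ?_)
  rw [(mem_powersetCard.1 (mem_filter.1 hS₀).1).2]
  exact NeZero.pos k

end BlowUpColoring

theorem prod_blockSize_add_sum_copyCount_le {T : Type} {k : ℕ} (hk : 1 < k)
    (R : Fin k → Fin k → T) (n : ℕ) :
    ∏ i : Fin k, blockSize k n i +
        ∑ i : Fin k, copyCount k (blockSize k n i) R (blowUpColoring hk R _) ≤
      copyCount k n R (blowUpColoring hk R n) := by
  have : NeZero k := ⟨by omega⟩
  have hdisj : Disjoint (transversalCopies k n) (univ.biUnion (blockCopies hk R n)) := by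
    refine disjoint_left.2 fun S hA hB => ?_
    obtain ⟨i, -, hBi⟩ := mem_biUnion.1 hB
    have h := congrArg card <| (image_residue_of_mem_transversalCopies hA).symm.trans
      (image_residue_of_mem_blockCopies hk R hBi)
    rw [card_univ, Fintype.card_fin, card_singleton] at h
    omega
  calc ∏ i : Fin k, blockSize k n i +
        ∑ i : Fin k, copyCount k (blockSize k n i) R (blowUpColoring hk R _)
      = #(transversalCopies k n ∪ univ.biUnion (blockCopies hk R n)) := by
        rw [card_union_of_disjoint hdisj, card_transversalCopies,
          card_biUnion fun i _ j _ hij => disjoint_left.2 fun S hi hj => hij <|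
            singleton_injective <| (image_residue_of_mem_blockCopies hk R hi).symm.trans
              (image_residue_of_mem_blockCopies hk R hj)]
        simp only [card_blockCopies]
    _ ≤ #(copies R (blowUpColoring hk R n)) :=
        card_le_card (union_subset (transversalCopies_subset hk R)
          (biUnion_subset.2 fun i _ => blockCopies_subset hk R n i))
    _ = copyCount k n R (blowUpColoring hk R n) := card_copies R _

theorem descFactorial_le_prod_blockSize_add_sum {k n : ℕ} [NeZero k] (hn : k ≤ n) :
    n.descFactorial k ≤
      (k ^ k - k) * ∏ i : Fin k, blockSize k n i +
        ∑ i : Fin k, (blockSize k n i).descFactorial k := by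
  have hq : 0 < n / k := Nat.div_pos hn (NeZero.pos k)
  have hpattern (p : Fin k → Fin k) : ∑ i, #{a | p a = i} = Fintype.card (Fin k) :=
    (card_eq_sum_card_fiberwise fun a _ => mem_univ (p a)).symm
  have hconst (j : Fin k) :
      ∏ i : Fin k, (blockSize k n i).descFactorial #{a | Function.const (Fin k) j a = i} =
        (blockSize k n j).descFactorial k := by
    rw [prod_eq_single j (fun i _ hij => by simp [Ne.symm hij]) (by simp)]
    simp
  calc n.descFactorial k = Fintype.card (Fin k ↪ Fin n) := by
        rw [Fintype.card_embedding_eq, Fintype.card_fin, Fintype.card_fin]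
    _ ≤ ∑ p : Fin k → Fin k,
          ∏ i, (#{x : Fin n | residue k x = i}).descFactorial #{a | p a = i} :=
        card_embedding_le_sum_prod (residue k)
    _ = ∑ p : Fin k → Fin k, ∏ i : Fin k, (blockSize k n i).descFactorial #{a | p a = i} := by
        simp only [card_residue_eq]
    _ ≤ _ := by
        simpa only [hconst, Fintype.card_fin] using sum_le_sub_mul_add_sum_const _ fun p =>
          prod_descFactorial_le_prod hq (fun i : Fin k => blockSize_mem_Icc i.2) (hpattern p)

theorem descFactorial_le_mul_copyCount {T : Type} {k : ℕ} (hk : 1 < k) (R : Fin k → Fin k → T)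
    (n : ℕ) : n.descFactorial k ≤ (k ^ k - k) * copyCount k n R (blowUpColoring hk R n) := by
  induction n using Nat.strong_induction_on with
  | _ n ih =>
  rcases lt_or_ge n k with hn | hn
  · simp [Nat.descFactorial_eq_zero_iff_lt.2 hn]
  have : NeZero k := ⟨by omega⟩
  calc n.descFactorial k
      ≤ (k ^ k - k) * ∏ i : Fin k, blockSize k n i +
          ∑ i : Fin k, (blockSize k n i).descFactorial k :=
        descFactorial_le_prod_blockSize_add_sum hn
    _ ≤ (k ^ k - k) * ∏ i : Fin k, blockSize k n i +
          ∑ i : Fin k, (k ^ k - k) * copyCount k (blockSize k n i) R (blowUpColoring hk R _) := by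
        gcongr with i
        exact ih _ (blockSize_lt hk hn)
    _ ≤ (k ^ k - k) * copyCount k n R (blowUpColoring hk R n) := by
        rw [← mul_sum, ← mul_add]
        exact Nat.mul_le_mul_left _ (prod_blockSize_add_sum_copyCount_le hk R n)

theorem inducibility_lower_bound_general {T : Type} [Fintype T] (k n : ℕ) (hk : 2 ≤ k)
    (R : Fin k → Fin k → T) (hR : IsSym R) :
    ((k.factorial : ℝ) / ((k : ℝ) ^ k - k)) * (n.choose k : ℝ) ≤ (maxCopyCount k n R : ℝ) := by
  have hcount : k.factorial * n.choose k ≤ (k ^ k - k) * maxCopyCount k n R := by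
    rw [← Nat.descFactorial_eq_factorial_mul_choose]
    exact (descFactorial_le_mul_copyCount hk R n).trans <| Nat.mul_le_mul_left _ <|
      copyCount_le_maxCopyCount R (isSym_blowUpColoring hk hR n)
  have hkk : k < k ^ k := Nat.lt_pow_self hk
  have hcast : ((k ^ k - k : ℕ) : ℝ) = (k : ℝ) ^ k - k := by
    push_cast [Nat.cast_sub hkk.le]; ring
  have hpos : (0 : ℝ) < (k : ℝ) ^ k - k := by
    rw [← hcast]; exact_mod_cast Nat.sub_pos_of_lt hkk
  rw [div_mul_eq_mul_div, div_le_iff₀ hpos, ← hcast, mul_comm (maxCopyCount k n R : ℝ)]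
  exact_mod_cast hcount

/-- For every `k ≥ 2`, every finite color set `T`, every `k`-vertex `T`-colored
complete graph `R` and every `n ≥ k`, `I(R,n) ≥ (k!/(k^k − k))·binom(n,k)`. -/
theorem inducibility_lower_bound {T : Type} [Fintype T] (k n : ℕ) (hk : 2 ≤ k) (hn : k ≤ n)
    (R : Fin k → Fin k → T) (hR : IsSym R) :
    ((k.factorial : ℝ) / ((k : ℝ) ^ k - k)) * (n.choose k : ℝ) ≤ (maxCopyCount k n R : ℝ) :=
  inducibility_lower_bound_general k n hk R hR
end

section
/- Let k ≥ 11, let R be the rainbow k-clique, and let H be an n-vertex T-edge-colored complete graph such that every vertex x ∈ V(H) satisfies d(x) ≥ n^{k−1}/(k^{k−1}−1). Then for every x ∈ V(H) and every color c ∈ T, the color degree d_c(x) is at most 0.4·n. -/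
open Finset Filter

open scoped Classical

/-!
A rainbow `k`-set through `x` gives `x` a role `a`, and then its other vertex of role `b` lies
in the color class `{a, b}` at `x`; hence `d(x) ≤ ∑_a ∏_{b ≠ a} d_{ab}(x)`. The color classes
at `x` are disjoint, so if `D = d_{ij}(x) > 0.4 n`, every star `b ↦ d_{ab}(x)` has total at
most `n - 1 - D` once the class `{i, j}` is removed (it belongs to the stars of `i` and `j`,
and is disjoint from the others). AM-GM then bounds the terms of `a = i, j` by
`D ((n - D) / (k - 2))^(k - 2)` and the others by `((n - D) / (k - 1))^(k - 1)`, and with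
`(1 + c/m)^m ≤ e^c` the sum is below `n^(k-1) / k^(k-1)` for `k ≥ 11`.
-/

theorem prod_le_div_card_pow {ι : Type*} {s : Finset ι} {f : ι → ℝ} {B : ℝ}
    (hf : ∀ i ∈ s, 0 ≤ f i) (hB : ∑ i ∈ s, f i ≤ B) :
    ∏ i ∈ s, f i ≤ (B / #s) ^ #s := by
  rcases s.eq_empty_or_nonempty with rfl | hs
  · simp
  have hc : (0 : ℝ) < #s := by exact_mod_cast hs.card_pos
  have amgm := Real.geom_mean_le_arith_mean s (fun _ => 1) f (fun _ _ => zero_le_one)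
    (by simpa using hc) hf
  simp only [Real.rpow_one, sum_const, nsmul_eq_mul, mul_one, one_mul] at amgm
  calc ∏ i ∈ s, f i = ((∏ i ∈ s, f i) ^ (#s : ℝ)⁻¹) ^ #s := by
        rw [← Real.rpow_natCast, ← Real.rpow_mul (prod_nonneg hf), inv_mul_cancel₀ hc.ne',
          Real.rpow_one]
    _ ≤ (B / #s) ^ #s := by
        gcongr
        · exact Real.rpow_nonneg (prod_nonneg hf) _
        · exact amgm.trans (by gcongr)

/-- `D ↦ D (a + b - D)^m` decreases for `D ≥ (a + b) / (m + 1)`, which `b ≤ 2a` guarantees. -/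
theorem mul_pow_le_of_add_le {a b D t : ℝ} {m : ℕ} (hm : 2 ≤ m) (ha : 0 ≤ a) (hb : b ≤ 2 * a)
    (hD : a ≤ D) (ht : 0 ≤ t) (hDt : D + t ≤ a + b) : D * t ^ m ≤ a * b ^ m := by
  obtain ⟨m, rfl⟩ : ∃ m', m = m' + 2 := ⟨m - 2, by omega⟩
  have htb : t ≤ b := by linarith
  have hsq : D * t ^ 2 ≤ a * b ^ 2 := by
    have hs : t ≤ a + b - D := by linarith
    have hgap : D * (a + b - D) ^ 2 ≤ a * b ^ 2 := by
      nlinarith [mul_nonneg (sub_nonneg.2 hD) (mul_nonneg (ht.trans hs)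
        (by linarith : (0 : ℝ) ≤ 2 * a - (a + b - D))),
        mul_nonneg (sub_nonneg.2 hD) (mul_nonneg ha (sub_nonneg.2 hD))]
    calc D * t ^ 2 ≤ D * (a + b - D) ^ 2 := by gcongr; linarith
      _ ≤ a * b ^ 2 := hgap
  calc D * t ^ (m + 2) = D * t ^ 2 * t ^ m := by ring
    _ ≤ a * b ^ 2 * b ^ m := by gcongr
    _ = a * b ^ (m + 2) := by ring

theorem add_two_mul_pow_le {m : ℕ} (hm : 9 ≤ m) : ((m : ℝ) + 2) * 0.6 ^ m ≤ 0.12 := by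
  induction m, hm using Nat.le_induction with
  | base => norm_num
  | succ m hm ih =>
    have : (9 : ℝ) ≤ m := by exact_mod_cast hm
    calc ((↑(m + 1) : ℝ) + 2) * 0.6 ^ (m + 1) = 0.6 * ((m : ℝ) + 3) * 0.6 ^ m := by
          push_cast; ring
      _ ≤ ((m : ℝ) + 2) * 0.6 ^ m := by gcongr; linarith
      _ ≤ 0.12 := ih

theorem div_pow_le_exp {m : ℕ} {c : ℝ} (hm : 0 < m) (hc : 0 ≤ c) :
    (((m : ℝ) + c) / m) ^ m ≤ Real.exp c := by
  have hm' : (0 : ℝ) < m := by exact_mod_cast hm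
  convert Real.one_sub_div_pow_le_exp_neg (n := m) (t := -c) (by linarith) using 2
  · field_simp; ring
  · ring

theorem rainbow_coeff_le_one {m : ℕ} (hm : 9 ≤ m) :
    (0.8 * 0.6 ^ m / (m : ℝ) ^ m + m * 0.6 ^ (m + 1) / ((m : ℝ) + 1) ^ (m + 1)) *
      ((m : ℝ) + 2) ^ (m + 1) ≤ 1 := by
  have hm0 : (0 : ℝ) < m := by exact_mod_cast (by omega : 0 < m)
  have he1 : Real.exp 1 ≤ 2.7182818286 := Real.exp_one_lt_d9.le
  have he2 : Real.exp 2 ≤ 7.39 := by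
    rw [show (2 : ℝ) = 1 + 1 by norm_num, Real.exp_add]
    nlinarith [Real.exp_pos 1]
  have hexp2 : (((m : ℝ) + 2) / m) ^ m ≤ Real.exp 2 := div_pow_le_exp (by omega) (by norm_num)
  have hexp1 : (((m : ℝ) + 1 + 1) / ((m + 1 : ℕ) : ℝ)) ^ (m + 1) ≤ Real.exp 1 :=
    by exact_mod_cast div_pow_le_exp (m := m + 1) (c := 1) (by omega) (by norm_num)
  push_cast at hexp1
  have hdecay := add_two_mul_pow_le hm
  have hpow : (0 : ℝ) ≤ 0.6 ^ m := by positivity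
  calc (0.8 * 0.6 ^ m / (m : ℝ) ^ m + m * 0.6 ^ (m + 1) / ((m : ℝ) + 1) ^ (m + 1)) *
        ((m : ℝ) + 2) ^ (m + 1)
      = 0.8 * (((m : ℝ) + 2) * 0.6 ^ m) * (((m : ℝ) + 2) / m) ^ m
        + 0.6 * (m * 0.6 ^ m) * (((m : ℝ) + 1 + 1) / ((m : ℝ) + 1)) ^ (m + 1) := by
        rw [div_pow, div_pow]; field_simp; ring
    _ ≤ 0.8 * (((m : ℝ) + 2) * 0.6 ^ m) * Real.exp 2
        + 0.6 * (((m : ℝ) + 2) * 0.6 ^ m) * Real.exp 1 := by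
        gcongr 0.8 * _ * ?_ + 0.6 * ?_ * ?_
        linarith
    _ ≤ 0.8 * 0.12 * 7.39 + 0.6 * 0.12 * 2.7182818286 := by
        gcongr
    _ ≤ 1 := by norm_num

theorem rainbow_bound_lt {m : ℕ} (hm : 9 ≤ m) {n D t : ℝ} (hn : 0 < n) (hD : 0.4 * n ≤ D)
    (ht : 0 ≤ t) (hDt : D + t ≤ n) :
    2 * D * (t / m) ^ m + m * (t / (m + 1)) ^ (m + 1) <
      n ^ (m + 1) / (((m : ℝ) + 2) ^ (m + 1) - 1) := by
  have hm0 : (0 : ℝ) < m := by exact_mod_cast (by omega : 0 < m)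
  have hDtm : D * t ^ m ≤ 0.4 * n * (0.6 * n) ^ m :=
    mul_pow_le_of_add_le (by omega) (by positivity) (by linarith) hD ht (by linarith)
  have ht6 : t ≤ 0.6 * n := by linarith
  have hK : (1 : ℝ) < ((m : ℝ) + 2) ^ (m + 1) :=
    one_lt_pow₀ (by linarith) (by omega)
  calc 2 * D * (t / m) ^ m + m * (t / (m + 1)) ^ (m + 1)
      = 2 * (D * t ^ m) / (m : ℝ) ^ m + m * t ^ (m + 1) / ((m : ℝ) + 1) ^ (m + 1) := by
        rw [div_pow, div_pow]; ring
    _ ≤ 2 * (0.4 * n * (0.6 * n) ^ m) / (m : ℝ) ^ m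
        + m * (0.6 * n) ^ (m + 1) / ((m : ℝ) + 1) ^ (m + 1) := by
        gcongr
    _ = (0.8 * 0.6 ^ m / (m : ℝ) ^ m + m * 0.6 ^ (m + 1) / ((m : ℝ) + 1) ^ (m + 1)) *
          n ^ (m + 1) := by ring
    _ ≤ n ^ (m + 1) / ((m : ℝ) + 2) ^ (m + 1) := by
        rw [le_div_iff₀ (by positivity), mul_right_comm]
        exact mul_le_of_le_one_left (by positivity) (rainbow_coeff_le_one hm)
    _ < n ^ (m + 1) / (((m : ℝ) + 2) ^ (m + 1) - 1) := by
        gcongr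
        linarith

theorem sum_colorDeg_lt {T : Type} {n : ℕ} (χ : Fin n → Fin n → T) (x : Fin n) (C : Finset T) :
    ∑ c ∈ C, colorDeg χ x c < n := by
  calc ∑ c ∈ C, colorDeg χ x c = #{y | y ≠ x ∧ χ x y ∈ C} := by
        rw [← filter_filter, ← sum_card_fiberwise_eq_card_filter]
        simp only [colorDeg, filter_filter]
    _ < #(univ : Finset (Fin n)) := card_lt_card (filter_ssubset.2 ⟨x, mem_univ _, by simp⟩)
    _ = n := by simp

theorem sum_colorDeg_add_sum_colorDeg_pair_lt {k n : ℕ} (χ : Fin n → Fin n → Finset (Fin k))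
    (x : Fin n) {a : Fin k} {C : Finset (Finset (Fin k))} (hC : ∀ c ∈ C, a ∉ c) :
    ∑ c ∈ C, colorDeg χ x c + ∑ b ∈ univ.erase a, colorDeg χ x {a, b} < n := by
  have hinj : Set.InjOn (fun b => ({a, b} : Finset (Fin k))) (univ.erase a) := by
    intro b hb b' _ (h : ({a, b} : Finset (Fin k)) = {a, b'})
    have : b ∈ ({a, b'} : Finset (Fin k)) := h ▸ by simp
    simpa [Finset.ne_of_mem_erase hb] using this
  have hdisj : Disjoint C ((univ.erase a).image fun b => ({a, b} : Finset (Fin k))) := by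
    rw [disjoint_right]
    simp only [mem_image]
    rintro _ ⟨b, -, rfl⟩ hC'
    exact hC _ hC' (by simp)
  rw [← sum_image hinj, ← sum_union hdisj]
  exact sum_colorDeg_lt χ x _

theorem vertDeg_le_sum_embCount {T : Type} (k n : ℕ) (R : Fin k → Fin k → T)
    (χ : Fin n → Fin n → T) (x : Fin n) :
    vertDeg k n R χ x ≤ ∑ a, embCount k n R χ a x := by
  calc vertDeg k n R χ x ≤ #(univ.sigma fun a => {φ : Fin k → Fin n | Function.Injective φ ∧
        φ a = x ∧ ∀ a b : Fin k, a ≠ b → χ (φ a) (φ b) = R a b}) := by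
        refine card_le_card_of_surjOn (fun p => univ.image p.2) ?_
        intro S hS
        simp only [coe_filter, mem_powersetCard, subset_univ, true_and, Set.mem_ofPred_eq] at hS
        obtain ⟨hcard, hx, φ, hinj, hmem, hcol⟩ := hS
        have himage : univ.image φ = S := eq_of_subset_of_card_le
          (by simpa [image_subset_iff] using hmem) (by simp [card_image_of_injective _ hinj, hcard])
        obtain ⟨a, -, rfl⟩ := mem_image.1 (himage ▸ hx)
        exact ⟨⟨a, φ⟩, by simpa [hinj] using hcol, himage⟩
    _ = ∑ a, embCount k n R χ a x := card_sigma _ _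

theorem embCount_rainbowClique_le {k n : ℕ} (χ : Fin n → Fin n → Finset (Fin k)) (a : Fin k)
    (x : Fin n) :
    embCount k n (rainbowClique k) χ a x ≤ ∏ b ∈ univ.erase a, colorDeg χ x {a, b} := by
  calc embCount k n (rainbowClique k) χ a x
      ≤ #(Fintype.piFinset fun b =>
          if b = a then {x} else ({y | y ≠ x ∧ χ x y = {a, b}} : Finset (Fin n))) := by
        refine card_le_card fun φ hφ => ?_
        simp only [mem_filter, mem_univ, true_and] at hφ
        obtain ⟨hinj, rfl, hcol⟩ := hφ
        refine Fintype.mem_piFinset.2 fun b => ?_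
        split_ifs with hb
        · simp [hb]
        · simpa [hinj.ne hb, rainbowClique] using hcol a b (Ne.symm hb)
    _ = ∏ b ∈ univ.erase a, colorDeg χ x {a, b} := by
        rw [Fintype.card_piFinset, ← mul_prod_erase _ _ (mem_univ a), if_pos rfl, card_singleton,
          one_mul]
        exact prod_congr rfl fun b hb => by rw [if_neg (ne_of_mem_erase hb), colorDeg]; congr

theorem prod_colorDeg_pair_le_of_ne {k n : ℕ} (χ : Fin n → Fin n → Finset (Fin k)) (x : Fin n)
    {i j a : Fin k} (hai : a ≠ i) (haj : a ≠ j) :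
    ∏ b ∈ univ.erase a, (colorDeg χ x {a, b} : ℝ) ≤
      (((n : ℝ) - 1 - colorDeg χ x {i, j}) / ((k - 1 : ℕ) : ℝ)) ^ (k - 1) := by
  have hlt := sum_colorDeg_add_sum_colorDeg_pair_lt χ x (a := a) (C := {{i, j}})
    (by simp [hai, haj])
  rw [sum_singleton, Nat.lt_iff_add_one_le] at hlt
  have hsum : ∑ b ∈ univ.erase a, (colorDeg χ x {a, b} : ℝ) ≤ n - 1 - colorDeg χ x {i, j} := by
    have := (Nat.cast_le (α := ℝ)).2 hlt
    push_cast at this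
    linarith
  simpa using prod_le_div_card_pow (fun _ _ => Nat.cast_nonneg _) hsum

theorem prod_colorDeg_pair_le_colorDeg_mul {k n : ℕ} (χ : Fin n → Fin n → Finset (Fin k))
    (x : Fin n) {i j : Fin k} (hij : i ≠ j) :
    ∏ b ∈ univ.erase i, (colorDeg χ x {i, b} : ℝ) ≤
      colorDeg χ x {i, j} *
        (((n : ℝ) - 1 - colorDeg χ x {i, j}) / ((k - 2 : ℕ) : ℝ)) ^ (k - 2) := by
  have hj : j ∈ univ.erase i := mem_erase.2 ⟨hij.symm, mem_univ j⟩
  have hlt := sum_colorDeg_add_sum_colorDeg_pair_lt χ x (a := i) (C := ∅) (by simp)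
  rw [sum_empty, zero_add, ← add_sum_erase _ _ hj, Nat.lt_iff_add_one_le] at hlt
  have hsum : ∑ b ∈ (univ.erase i).erase j, (colorDeg χ x {i, b} : ℝ) ≤
      n - 1 - colorDeg χ x {i, j} := by
    have := (Nat.cast_le (α := ℝ)).2 hlt
    push_cast at this
    linarith
  have hcard : #((univ.erase i).erase j) = k - 2 := by
    rw [card_erase_of_mem hj, card_erase_of_mem (mem_univ i), card_univ, Fintype.card_fin]
    omega
  rw [← mul_prod_erase _ _ hj, ← hcard]
  gcongr
  exact prod_le_div_card_pow (fun _ _ => Nat.cast_nonneg _) hsum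

theorem vertDeg_rainbowClique_le {k n : ℕ} (χ : Fin n → Fin n → Finset (Fin k)) (x : Fin n)
    {i j : Fin k} (hij : i ≠ j) :
    (vertDeg k n (rainbowClique k) χ x : ℝ) ≤
      2 * colorDeg χ x {i, j} *
          (((n : ℝ) - 1 - colorDeg χ x {i, j}) / ((k - 2 : ℕ) : ℝ)) ^ (k - 2) +
        ((k - 2 : ℕ) : ℝ) *
          (((n : ℝ) - 1 - colorDeg χ x {i, j}) / ((k - 1 : ℕ) : ℝ)) ^ (k - 1) := by
  have hj : j ∈ univ.erase i := mem_erase.2 ⟨hij.symm, mem_univ j⟩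
  have hcount : (vertDeg k n (rainbowClique k) χ x : ℝ) ≤
      ∑ a, ∏ b ∈ univ.erase a, (colorDeg χ x {a, b} : ℝ) := by
    exact_mod_cast (vertDeg_le_sum_embCount k n _ χ x).trans
      (sum_le_sum fun a _ => embCount_rainbowClique_le χ a x)
  rw [← add_sum_erase _ _ (mem_univ i), ← add_sum_erase _ _ hj] at hcount
  have hi := prod_colorDeg_pair_le_colorDeg_mul χ x hij
  have hj' := prod_colorDeg_pair_le_colorDeg_mul χ x hij.symm
  rw [pair_comm j i] at hj'
  have hrest := sum_le_card_nsmul ((univ.erase i).erase j) _ _ fun a ha =>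
    prod_colorDeg_pair_le_of_ne χ x (ne_of_mem_erase (mem_of_mem_erase ha)) (ne_of_mem_erase ha)
  rw [card_erase_of_mem hj, card_erase_of_mem (mem_univ i), card_univ, Fintype.card_fin,
    nsmul_eq_mul, Nat.sub_sub] at hrest
  linarith

theorem max_color_degree_general (k n : ℕ) (hk : 11 ≤ k)
    (χ : Fin n → Fin n → Finset (Fin k))
    (hdeg : ∀ x : Fin n,
      (n : ℝ) ^ (k - 1) / ((k : ℝ) ^ (k - 1) - 1) ≤ (vertDeg k n (rainbowClique k) χ x : ℝ)) :
    ∀ x : Fin n, ∀ i j : Fin k, i ≠ j →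
      (colorDeg χ x ({i, j} : Finset (Fin k)) : ℝ) ≤ 0.4 * (n : ℝ) := by
  intro x i j hij
  by_contra! hD
  obtain ⟨m, rfl⟩ : ∃ m, k = m + 2 := ⟨k - 2, by omega⟩
  have hn : (0 : ℝ) < n := by exact_mod_cast x.pos
  have hDn : (colorDeg χ x {i, j} : ℝ) + 1 ≤ n := by
    exact_mod_cast Nat.lt_iff_add_one_le.1 (by simpa using sum_colorDeg_lt χ x {{i, j}})
  have hupper := vertDeg_rainbowClique_le χ x hij
  have hlower := hdeg x
  have hlt := rainbow_bound_lt (m := m) (t := n - 1 - colorDeg χ x {i, j}) (by omega) hn hD.le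
    (by linarith) (by linarith)
  simp only [Nat.add_sub_cancel, show m + 2 - 1 = m + 1 by omega] at hupper hlower
  push_cast at hupper hlower
  linarith

/-- maximum color degree for the rainbow `k`-clique, `k ≥ 11`: if every vertex has
`d(x) ≥ n^{k−1}/(k^{k−1}−1)` then every color degree is at most `0.4·n`. -/
theorem max_color_degree (k n : ℕ) (hk : 11 ≤ k)
    (χ : Fin n → Fin n → Finset (Fin k)) (hχ : IsSym χ)
    (hdeg : ∀ x : Fin n,
      (n : ℝ) ^ (k - 1) / ((k : ℝ) ^ (k - 1) - 1) ≤ (vertDeg k n (rainbowClique k) χ x : ℝ)) :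
    ∀ x : Fin n, ∀ i j : Fin k, i ≠ j →
      (colorDeg χ x ({i, j} : Finset (Fin k)) : ℝ) ≤ 0.4 * (n : ℝ) :=
  max_color_degree_general k n hk χ hdeg
end

section
/- Let k ≥ 3, let R be the rainbow k-clique, let H be an n-vertex T-edge-colored complete graph with coloring χ_H, and let V(H) = V_1 ∪ ⋯ ∪ V_k be a partition. Let D be the set of unordered pairs {v,w} with v ∈ V_i, w ∈ V_j, i ≠ j, and χ_H(vw) ≠ {i,j}. Suppose f ⊆ V(H) is a k-subset whose induced coloring is isomorphic to R, f is not contained in any single part V_i, and it is NOT the case that |f ∩ V_i| = 1 for every i ∈ [k] with the map sending each i to the unique vertex of f ∩ V_i being a color-preserving isomorphism from R to the induced coloring on f. Then at least k−2 of the pairs contained in f belong to D. -/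
open Finset Filter

open scoped Classical

/-- Auxiliary counting lemma: if `g : Fin k → Fin k` is not constant and has a non-fixed
point, then there are at least `k - 2` "bad" pairs `{a,b}` with `g a ≠ g b` and
`{a,b} ≠ {g a, g b}`. -/
private lemma key_count {k : ℕ} (hk : 3 ≤ k) (g : Fin k → Fin k)
    (hnc : ∃ a b : Fin k, g a ≠ g b) (a₀ : Fin k) (ha₀ : g a₀ ≠ a₀) :
    k - 2 ≤ ((Finset.powersetCard 2 (Finset.univ : Finset (Fin k))).filter
      (fun e => ∃ a ∈ e, ∃ b ∈ e, a ≠ b ∧ g a ≠ g b ∧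
        ({a, b} : Finset (Fin k)) ≠ {g a, g b})).card := by
  classical
  set c := g a₀ with hc
  set Bad := ((Finset.powersetCard 2 (Finset.univ : Finset (Fin k))).filter
      (fun e => ∃ a ∈ e, ∃ b ∈ e, a ≠ b ∧ g a ≠ g b ∧
        ({a, b} : Finset (Fin k)) ≠ {g a, g b})) with hBad
  have ha0c : a₀ ≠ c := fun h => ha₀ h.symm
  set Sc := (Finset.univ.erase c).filter (fun a => g a = c) with hScdef
  set Tt := (Finset.univ.erase c).filter (fun a => ¬ g a = c) with hTtdef
  have hcard : Sc.card + Tt.card = k - 1 := by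
    rw [hScdef, hTtdef, Finset.card_filter_add_card_filter_not,
      Finset.card_erase_of_mem (Finset.mem_univ c), Finset.card_univ, Fintype.card_fin]
  have ha₀S : a₀ ∈ Sc := by
    rw [hScdef]
    exact Finset.mem_filter.mpr ⟨Finset.mem_erase.mpr ⟨ha0c, Finset.mem_univ _⟩, hc.symm⟩
  have hs1 : 1 ≤ Sc.card := Finset.card_pos.mpr ⟨a₀, ha₀S⟩
  have memBad : ∀ a x : Fin k, a ≠ c → x ≠ c → g a = c → g x ≠ c →
      ({a, x} : Finset (Fin k)) ∈ Bad := by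
    intro a x hac hxc hga hgx
    have hax : a ≠ x := by intro h; exact hgx (h ▸ hga)
    refine Finset.mem_filter.mpr ⟨Finset.mem_powersetCard.mpr
      ⟨Finset.subset_univ _, by rw [Finset.card_pair hax]⟩, ?_⟩
    refine ⟨a, by simp, x, by simp, hax, ?_, ?_⟩
    · rw [hga]; exact fun h => hgx h.symm
    · intro h
      have hcm : c ∈ ({a, x} : Finset (Fin k)) := by
        rw [h, ← hga]; simp
      rcases Finset.mem_insert.mp hcm with h1 | h1
      · exact hac h1.symm
      · exact hxc (Finset.mem_singleton.mp h1).symm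
  have memBad2 : ∀ a : Fin k, a ≠ c → a ≠ g c → g a = c → g c ≠ c →
      ({a, c} : Finset (Fin k)) ∈ Bad := by
    intro a hac hagc hga hgc
    refine Finset.mem_filter.mpr ⟨Finset.mem_powersetCard.mpr
      ⟨Finset.subset_univ _, by rw [Finset.card_pair hac]⟩,
      a, by simp, c, by simp, hac, ?_, ?_⟩
    · rw [hga]; exact fun h => hgc h.symm
    · intro h
      have ham : a ∈ ({g a, g c} : Finset (Fin k)) := by rw [← h]; simp
      rcases Finset.mem_insert.mp ham with h1 | h1
      · rw [hga] at h1; exact hac h1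
      · exact hagc (Finset.mem_singleton.mp h1)
  by_cases ht : Tt.card = 0
  · -- Tt empty: every x ≠ c maps to c
    have hTe : Tt = ∅ := Finset.card_eq_zero.mp ht
    have hall : ∀ x : Fin k, x ≠ c → g x = c := by
      intro x hx
      by_contra hgx
      have : x ∈ Tt := by
        rw [hTtdef]
        exact Finset.mem_filter.mpr ⟨Finset.mem_erase.mpr ⟨hx, Finset.mem_univ _⟩, hgx⟩
      rw [hTe] at this
      exact absurd this (Finset.notMem_empty x)
    have hgc : g c ≠ c := by
      intro hgcc
      obtain ⟨a, b, hab⟩ := hnc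
      have hA : g a = c := by
        by_cases h : a = c
        · rw [h, hgcc]
        · exact hall a h
      have hB : g b = c := by
        by_cases h : b = c
        · rw [h, hgcc]
        · exact hall b h
      exact hab (hA.trans hB.symm)
    set E₂ := (Sc.erase (g c)).image (fun a => ({a, c} : Finset (Fin k))) with hE₂
    have hsubset : E₂ ⊆ Bad := by
      intro e he
      obtain ⟨a, ha, rfl⟩ := Finset.mem_image.mp he
      obtain ⟨hagc, haS⟩ := Finset.mem_erase.mp ha
      obtain ⟨hae, hga⟩ := Finset.mem_filter.mp haS
      exact memBad2 a (Finset.mem_erase.mp hae).1 hagc hga hgc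
    have hcardE₂ : E₂.card = (Sc.erase (g c)).card := by
      rw [hE₂]
      apply Finset.card_image_of_injOn
      intro a ha b hb hab
      have haS := (Finset.mem_erase.mp ha).2
      have hac := (Finset.mem_erase.mp (Finset.mem_filter.mp haS).1).1
      have hab' : ({a, c} : Finset (Fin k)) = {b, c} := hab
      have ham : a ∈ ({b, c} : Finset (Fin k)) := by rw [← hab']; simp
      rcases Finset.mem_insert.mp ham with h1 | h1
      · exact h1
      · exact absurd (Finset.mem_singleton.mp h1) hac
    have hle : Sc.card - 1 ≤ (Sc.erase (g c)).card := Finset.pred_card_le_card_erase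
    calc k - 2 = (k - 1) - 1 := by omega
      _ = Sc.card - 1 := by omega
      _ ≤ (Sc.erase (g c)).card := hle
      _ = E₂.card := hcardE₂.symm
      _ ≤ Bad.card := Finset.card_le_card hsubset
  · -- Tt nonempty
    have ht1 : 1 ≤ Tt.card := Nat.one_le_iff_ne_zero.mpr ht
    set E₁ := (Sc ×ˢ Tt).image (fun p => ({p.1, p.2} : Finset (Fin k))) with hE₁
    have mems : ∀ p : Fin k × Fin k, p ∈ Sc ×ˢ Tt →
        (p.1 ≠ c ∧ g p.1 = c) ∧ (p.2 ≠ c ∧ ¬ g p.2 = c) := by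
      intro p hp
      obtain ⟨h1, h2⟩ := Finset.mem_product.mp hp
      obtain ⟨h1e, h1g⟩ := Finset.mem_filter.mp h1
      obtain ⟨h2e, h2g⟩ := Finset.mem_filter.mp h2
      exact ⟨⟨(Finset.mem_erase.mp h1e).1, h1g⟩, ⟨(Finset.mem_erase.mp h2e).1, h2g⟩⟩
    have hsubset : E₁ ⊆ Bad := by
      intro e he
      obtain ⟨p, hp, rfl⟩ := Finset.mem_image.mp he
      obtain ⟨⟨h1, h2⟩, ⟨h3, h4⟩⟩ := mems p hp
      exact memBad p.1 p.2 h1 h3 h2 h4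
    have hcardE₁ : E₁.card = Sc.card * Tt.card := by
      rw [hE₁, Finset.card_image_of_injOn, Finset.card_product]
      intro p hp q hq hpq
      obtain ⟨⟨hp1c, hp1g⟩, ⟨hp2c, hp2g⟩⟩ := mems p hp
      obtain ⟨⟨hq1c, hq1g⟩, ⟨hq2c, hq2g⟩⟩ := mems q hq
      simp only at hpq
      have h1m : p.1 ∈ ({q.1, q.2} : Finset (Fin k)) := by rw [← hpq]; simp
      have h11 : p.1 = q.1 := by
        rcases Finset.mem_insert.mp h1m with h | h
        · exact h
        · exact absurd (Finset.mem_singleton.mp h ▸ hp1g) hq2g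
      have h2m : p.2 ∈ ({q.1, q.2} : Finset (Fin k)) := by rw [← hpq]; simp
      have h22 : p.2 = q.2 := by
        rcases Finset.mem_insert.mp h2m with h | h
        · exact absurd (h ▸ hq1g) hp2g
        · exact Finset.mem_singleton.mp h
      exact Prod.ext h11 h22
    obtain ⟨s', hs'⟩ := Nat.exists_eq_add_of_le hs1
    obtain ⟨t', ht'⟩ := Nat.exists_eq_add_of_le ht1
    calc k - 2 = 1 + s' + t' := by omega
      _ ≤ 1 + s' + t' + s' * t' := Nat.le_add_right _ _
      _ = (1 + s') * (1 + t') := by ring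
      _ = Sc.card * Tt.card := by rw [hs', ht']
      _ = E₁.card := hcardE₁.symm
      _ ≤ Bad.card := Finset.card_le_card hsubset

/-- every "bad" copy of the rainbow `k`-clique (with respect to a partition of the
vertex set into parts `V_1, …, V_k`, encoded by `P : Fin n → Fin k`) contains at least `k − 2`
miscolored pairs. -/
theorem bad_copy_has_many_bad_pairs (k n : ℕ) (hk : 3 ≤ k)
    (χ : Fin n → Fin n → Finset (Fin k)) (hχ : IsSym χ)
    (P : Fin n → Fin k)
    (f : Finset (Fin n)) (hfcard : f.card = k)
    (hcopy : ∃ φ : Fin k → Fin n, Function.Injective φ ∧ (∀ a, φ a ∈ f) ∧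
      ∀ a b : Fin k, a ≠ b → χ (φ a) (φ b) = rainbowClique k a b)
    (hnotinpart : ¬ ∃ i : Fin k, ∀ v ∈ f, P v = i)
    (hnotnatural : ¬ ∃ φ : Fin k → Fin n, Function.Injective φ ∧ (∀ a, φ a ∈ f) ∧
      (∀ a, P (φ a) = a) ∧ ∀ a b : Fin k, a ≠ b → χ (φ a) (φ b) = rainbowClique k a b) :
    k - 2 ≤ ((Finset.powersetCard 2 f).filter
      (fun e => ∃ v ∈ e, ∃ w ∈ e, v ≠ w ∧ P v ≠ P w ∧
        χ v w ≠ ({P v, P w} : Finset (Fin k)))).card := by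
  classical
  obtain ⟨φ, hinj, hmem, hcol⟩ := hcopy
  set g : Fin k → Fin k := fun a => P (φ a) with hg
  -- φ is surjective onto f
  have himg : Finset.image φ Finset.univ = f := by
    apply Finset.eq_of_subset_of_card_le
    · intro v hv
      obtain ⟨a, _, rfl⟩ := Finset.mem_image.mp hv
      exact hmem a
    · rw [Finset.card_image_of_injective _ hinj, Finset.card_univ, Fintype.card_fin, hfcard]
  have hsurj : ∀ v ∈ f, ∃ a, φ a = v := by
    intro v hv
    rw [← himg] at hv
    obtain ⟨a, _, ha⟩ := Finset.mem_image.mp hv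
    exact ⟨a, ha⟩
  -- g is not constant
  have hnc : ∃ a b : Fin k, g a ≠ g b := by
    by_contra h
    push_neg at h
    apply hnotinpart
    refine ⟨g ⟨0, by omega⟩, ?_⟩
    intro v hv
    obtain ⟨a, rfl⟩ := hsurj v hv
    exact h a ⟨0, by omega⟩
  -- g is not the identity
  have ha₀ : ∃ a₀ : Fin k, g a₀ ≠ a₀ := by
    by_contra h
    push_neg at h
    exact hnotnatural ⟨φ, hinj, hmem, h, hcol⟩
  obtain ⟨a₀, ha₀⟩ := ha₀
  refine le_trans (key_count hk g hnc a₀ ha₀) ?_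
  apply Finset.card_le_card_of_injOn (fun e => e.image φ)
  · intro e he
    obtain ⟨hpow, a, hae, b, hbe, hab, hgab, hne⟩ := Finset.mem_filter.mp he
    obtain ⟨_, hecard⟩ := Finset.mem_powersetCard.mp hpow
    refine Finset.mem_filter.mpr ⟨Finset.mem_powersetCard.mpr ⟨?_, ?_⟩, ?_⟩
    · intro v hv
      obtain ⟨x, _, rfl⟩ := Finset.mem_image.mp hv
      exact hmem x
    · rw [Finset.card_image_of_injective _ hinj, hecard]
    · refine ⟨φ a, Finset.mem_image_of_mem φ hae, φ b, Finset.mem_image_of_mem φ hbe,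
        hinj.ne hab, hgab, ?_⟩
      rw [hcol a b hab]
      exact hne
  · intro e1 h1 e2 h2 h12
    exact Finset.image_injective hinj h12
end

section
/- Let R be a connected rainbow graph on vertex set [k] with edge set E, k ≥ 2, viewed as a T-edge-colored complete graph with T = E ∪ {∅}, and let H be an n-vertex T-edge-colored complete graph with coloring χ_H. For x ∈ V(H) let B(x) = {y ≠ x : χ_H(xy) ≠ ∅}. Then for every i ∈ [k] with 1 ≤ deg_R(i) ≤ k−2 and every x ∈ V(H), d_i(x) ≤ (|B(x)|/deg_R(i))^{deg_R(i)} · ((n − |B(x)|)/(k − deg_R(i) − 1))^{k − deg_R(i) − 1}. -/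
open Finset Filter

open scoped Classical

section Aux
variable {k n : ℕ} (G : SimpleGraph (Fin k)) (χ : Fin n → Fin n → Finset (Fin k))

lemma my_amgm (j : ℕ) (p q : ℝ) (hq : 0 ≤ q) (hqp : q ≤ p) :
    q * ((p - q) / (j : ℝ)) ^ j ≤ (p / ((j : ℝ) + 1)) ^ (j + 1) := by
  rcases Nat.eq_zero_or_pos j with hj | hj
  · subst hj; simp; linarith
  · have hjR : (0:ℝ) < j := by exact_mod_cast hj
    set b : ℝ := (p - q) / (j:ℝ) with hb
    have hb0 : 0 ≤ b := div_nonneg (by linarith) hjR.le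
    have hw : (1:ℝ)/((j:ℝ)+1) + (j:ℝ)/((j:ℝ)+1) = 1 := by field_simp; ring
    have key := Real.geom_mean_le_arith_mean2_weighted (by positivity) (by positivity) hq hb0 hw
    have hsum : (1/((j:ℝ)+1)) * q + ((j:ℝ)/((j:ℝ)+1)) * b = p / ((j:ℝ)+1) := by
      rw [hb]; field_simp; ring
    rw [hsum] at key
    have hLnn : (0:ℝ) ≤ q ^ ((1:ℝ)/((j:ℝ)+1)) * b ^ ((j:ℝ)/((j:ℝ)+1)) := by positivity
    have h2 := pow_le_pow_left₀ hLnn key (j+1)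
    calc q * b ^ j = (q ^ ((1:ℝ)/((j:ℝ)+1)) * b ^ ((j:ℝ)/((j:ℝ)+1))) ^ (j+1) := by
          rw [mul_pow, ← Real.rpow_natCast (q ^ ((1:ℝ)/((j:ℝ)+1))) (j+1),
              ← Real.rpow_natCast (b ^ ((j:ℝ)/((j:ℝ)+1))) (j+1),
              ← Real.rpow_mul hq, ← Real.rpow_mul hb0]
          push_cast
          rw [one_div, inv_mul_cancel₀ (by positivity), div_mul_cancel₀ _ (by positivity : ((j:ℝ)+1) ≠ 0), Real.rpow_one, Real.rpow_natCast]
      _ ≤ (p/((j:ℝ)+1))^(j+1) := h2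

lemma walk_boundary (U : Finset (Fin k)) :
    ∀ {s t : Fin k}, G.Walk s t → s ∉ U → t ∈ U → ∃ a ∈ U, ∃ u, u ∉ U ∧ G.Adj u a := by
  intro s t w
  induction w with
  | nil => intro hs ht; exact absurd ht hs
  | @cons u v w' h p ih =>
    intro hs ht
    by_cases hvU : v ∈ U
    · exact ⟨v, hvU, u, hs, h⟩
    · exact ih hvU ht

lemma boundary (hG : G.Connected) {i : Fin k}
    {U : Finset (Fin k)} (hiU : i ∉ U) (hU : U.Nonempty) :
    ∃ a ∈ U, ∃ u, u ∉ U ∧ G.Adj u a := by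
  obtain ⟨v, hv⟩ := hU
  obtain ⟨w⟩ := hG.preconnected i v
  exact walk_boundary G U w hiU hv

/-- number of embeddings extending `ψ` outside `U`. -/
noncomputable def cnt (U : Finset (Fin k)) (ψ : Fin k → Fin n) : ℕ :=
  ((Finset.univ : Finset (Fin k → Fin n)).filter
    (fun φ => Function.Injective φ ∧ (∀ a, a ∉ U → φ a = ψ a) ∧
      ∀ a b : Fin k, a ≠ b → χ (φ a) (φ b) = rainbowOf G a b)).card

/-- candidate images for vertex `a`. -/
noncomputable def cand (U : Finset (Fin k)) (ψ : Fin k → Fin n) (a : Fin k) : Finset (Fin n) :=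
  (Finset.univ : Finset (Fin n)).filter
    (fun y => (∀ u, u ∉ U → ψ u ≠ y) ∧ ∀ u, u ∉ U → χ (ψ u) y = rainbowOf G u a)

lemma cand_update_subset {U : Finset (Fin k)} {a : Fin k} (haU : a ∈ U)
    (ψ : Fin k → Fin n) (y : Fin n) (a' : Fin k) :
    cand G χ (U.erase a) (Function.update ψ a y) a' ⊆ cand G χ U ψ a' := by
  intro y' hy'
  simp only [cand, Finset.mem_filter, Finset.mem_univ, true_and] at hy' ⊢
  obtain ⟨h1, h2⟩ := hy'
  have hne : ∀ u, u ∉ U → u ≠ a := fun u hu e => hu (e ▸ haU)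
  have hmem : ∀ u, u ∉ U → u ∉ U.erase a := fun u hu h => hu (Finset.mem_of_mem_erase h)
  refine ⟨fun u hu => ?_, fun u hu => ?_⟩
  · have := h1 u (hmem u hu); rwa [Function.update_of_ne (hne u hu)] at this
  · have := h2 u (hmem u hu); rwa [Function.update_of_ne (hne u hu)] at this

lemma cand_update_disjoint {U : Finset (Fin k)} {a u₀ a' : Fin k}
    (haU : a ∈ U) (hu₀ : u₀ ∉ U) (hadj : G.Adj u₀ a) (ha' : a' ∈ U.erase a)
    (ψ : Fin k → Fin n) (y : Fin n) {y' : Fin n}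
    (hy' : y' ∈ cand G χ (U.erase a) (Function.update ψ a y) a') :
    y' ∉ cand G χ U ψ a := by
  intro hy'a
  simp only [cand, Finset.mem_filter, Finset.mem_univ, true_and] at hy' hy'a
  have hu₀e : u₀ ∉ U.erase a := fun h => hu₀ (Finset.mem_of_mem_erase h)
  have h1 := hy'.2 u₀ hu₀e
  rw [Function.update_of_ne (fun e => hu₀ (by rw [e]; exact haU))] at h1
  have h2 := hy'a.2 u₀ hu₀
  have heq : rainbowOf G u₀ a' = rainbowOf G u₀ a := h1.symm.trans h2
  have haa' : a' ≠ a := (Finset.mem_erase.mp ha').1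
  have ha'U : a' ∈ U := Finset.mem_of_mem_erase ha'
  have ha'u₀ : a' ≠ u₀ := fun e => hu₀ (e ▸ ha'U)
  simp only [rainbowOf] at heq
  rw [if_pos hadj] at heq
  by_cases h : G.Adj u₀ a'
  · rw [if_pos h] at heq
    have : a' ∈ ({u₀, a} : Finset (Fin k)) := heq ▸ (by simp : a' ∈ ({u₀, a'} : Finset (Fin k)))
    simp only [Finset.mem_insert, Finset.mem_singleton] at this
    rcases this with e | e
    · exact ha'u₀ e
    · exact haa' e
  · rw [if_neg h] at heq
    exact (Finset.insert_ne_empty u₀ {a}) heq.symm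

lemma key (hG : G.Connected) (i : Fin k) :
    ∀ (N : ℕ) (U : Finset (Fin k)) (P Q : Finset (Fin n)) (ψ : Fin k → Fin n),
      U.card = N → i ∉ U →
      (∀ a ∈ U, G.Adj i a → cand G χ U ψ a ⊆ P) →
      (∀ a ∈ U, ¬ G.Adj i a → cand G χ U ψ a ⊆ Q) →
      (cnt G χ U ψ : ℝ) ≤
        ((P.card : ℝ) / (((U.filter (fun b => G.Adj i b)).card : ℕ) : ℝ)) ^
            ((U.filter (fun b => G.Adj i b)).card) *
        ((Q.card : ℝ) / (((U.filter (fun b => ¬ G.Adj i b)).card : ℕ) : ℝ)) ^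
            ((U.filter (fun b => ¬ G.Adj i b)).card) := by
  intro N
  induction N with
  | zero =>
    intro U P Q ψ hcard _ _ _
    have hU : U = ∅ := Finset.card_eq_zero.mp hcard
    subst hU
    simp only [Finset.filter_empty, Finset.card_empty, pow_zero, mul_one]
    have h1 : cnt G χ (∅ : Finset (Fin k)) ψ ≤ 1 := by
      apply Finset.card_le_one.mpr
      intro φ hφ φ' hφ'
      simp only [Finset.mem_filter, Finset.mem_univ, true_and] at hφ hφ'
      have e1 : φ = ψ := funext fun a => hφ.2.1 a (Finset.notMem_empty a)
      have e2 : φ' = ψ := funext fun a => hφ'.2.1 a (Finset.notMem_empty a)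
      rw [e1, e2]
    exact_mod_cast h1
  | succ N ih =>
    intro U P Q ψ hcard hiU hPB hQZ
    have hUne : U.Nonempty := Finset.card_pos.mp (by omega)
    obtain ⟨a, haU, u₀, hu₀U, hadj⟩ := boundary G hG hiU hUne
    set C := cand G χ U ψ a with hC
    set r := (U.filter (fun b => G.Adj i b)).card with hr
    set s := (U.filter (fun b => ¬ G.Adj i b)).card with hs
    -- counting: cnt U ψ ≤ ∑_{y ∈ C} cnt (U.erase a) (update ψ a y)
    have h1 : cnt G χ U ψ ≤ ∑ y ∈ C, cnt G χ (U.erase a) (Function.update ψ a y) := by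
      refine le_trans (Finset.card_le_card ?_) Finset.card_biUnion_le
      intro φ hφ
      simp only [cnt, Finset.mem_filter, Finset.mem_univ, true_and] at hφ
      obtain ⟨hinj, hfix, hcol⟩ := hφ
      refine Finset.mem_biUnion.mpr ⟨φ a, ?_, ?_⟩
      · simp only [hC, cand, Finset.mem_filter, Finset.mem_univ, true_and]
        refine ⟨fun u hu => ?_, fun u hu => ?_⟩
        · rw [← hfix u hu]
          exact fun e => hu ((hinj e) ▸ haU)
        · rw [← hfix u hu]
          exact hcol u a (fun e => hu (e ▸ haU))
      · simp only [cnt, Finset.mem_filter, Finset.mem_univ, true_and]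
        refine ⟨hinj, fun c hc => ?_, hcol⟩
        by_cases hca : c = a
        · subst hca; rw [Function.update_self]
        · rw [Function.update_of_ne hca]
          exact hfix c (fun hcU => hc (Finset.mem_erase.mpr ⟨hca, hcU⟩))
    by_cases hai : G.Adj i a
    · -- a is a neighbor of i
      have haF : a ∈ U.filter (fun b => G.Adj i b) := Finset.mem_filter.mpr ⟨haU, hai⟩
      have hr1 : 1 ≤ r := Finset.card_pos.mpr ⟨a, haF⟩
      have hCP : C ⊆ P := hPB a haU hai
      have e1 : ((U.erase a).filter (fun b => G.Adj i b)).card = r - 1 := by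
        rw [Finset.filter_erase, Finset.card_erase_of_mem haF]
      have e2 : ((U.erase a).filter (fun b => ¬ G.Adj i b)).card = s := by
        rw [Finset.filter_erase, Finset.erase_eq_of_notMem (by simp [hai])]
      have hIH : ∀ y ∈ C, (cnt G χ (U.erase a) (Function.update ψ a y) : ℝ) ≤
          (((P \ C).card : ℝ) / ((r - 1 : ℕ) : ℝ)) ^ (r - 1) *
          ((Q.card : ℝ) / ((s : ℕ) : ℝ)) ^ s := by
        intro y hy
        have := ih (U.erase a) (P \ C) Q (Function.update ψ a y)
          (by rw [Finset.card_erase_of_mem haU, hcard]; rfl)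
          (fun h => hiU (Finset.mem_of_mem_erase h))
          (fun a' ha' hadj' => by
            intro y' hy'
            refine Finset.mem_sdiff.mpr ⟨?_, ?_⟩
            · exact hPB a' (Finset.mem_of_mem_erase ha') hadj'
                (cand_update_subset G χ haU ψ y a' hy')
            · exact cand_update_disjoint G χ haU hu₀U hadj ha' ψ y hy')
          (fun a' ha' hadj' => fun y' hy' =>
            hQZ a' (Finset.mem_of_mem_erase ha') hadj'
              (cand_update_subset G χ haU ψ y a' hy'))
        rwa [e1, e2] at this
      have hsum : (cnt G χ U ψ : ℝ) ≤ (C.card : ℝ) *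
          ((((P \ C).card : ℝ) / ((r - 1 : ℕ) : ℝ)) ^ (r - 1) *
          ((Q.card : ℝ) / ((s : ℕ) : ℝ)) ^ s) := by
        calc (cnt G χ U ψ : ℝ) ≤ ∑ y ∈ C, (cnt G χ (U.erase a) (Function.update ψ a y) : ℝ) := by
              exact_mod_cast h1
          _ ≤ C.card • ((((P \ C).card : ℝ) / ((r - 1 : ℕ) : ℝ)) ^ (r - 1) *
              ((Q.card : ℝ) / ((s : ℕ) : ℝ)) ^ s) := Finset.sum_le_card_nsmul C _ _ hIH
          _ = _ := nsmul_eq_mul _ _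
      have hqle : C.card ≤ P.card := Finset.card_le_card hCP
      have hPC : ((P \ C).card : ℝ) = (P.card : ℝ) - (C.card : ℝ) := by
        rw [Finset.card_sdiff_of_subset hCP]; push_cast [Nat.cast_sub hqle]; ring
      have hA : (C.card : ℝ) * (((P \ C).card : ℝ) / ((r - 1 : ℕ) : ℝ)) ^ (r - 1) ≤
          ((P.card : ℝ) / (r : ℝ)) ^ r := by
        rw [hPC]
        have h := my_amgm (r - 1) (P.card : ℝ) (C.card : ℝ) (by positivity) (by exact_mod_cast hqle)
        rw [show ((r - 1 : ℕ) : ℝ) + 1 = (r : ℝ) by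
              rw [Nat.cast_sub hr1]; push_cast; ring,
            Nat.sub_add_cancel hr1] at h
        exact h
      calc (cnt G χ U ψ : ℝ) ≤ _ := hsum
        _ = ((C.card : ℝ) * (((P \ C).card : ℝ) / ((r - 1 : ℕ) : ℝ)) ^ (r - 1)) *
            ((Q.card : ℝ) / ((s : ℕ) : ℝ)) ^ s := by ring
        _ ≤ ((P.card : ℝ) / (r : ℝ)) ^ r * ((Q.card : ℝ) / ((s : ℕ) : ℝ)) ^ s := by
            apply mul_le_mul_of_nonneg_right hA (by positivity)
    · -- a is a non-neighbor of i
      have haF : a ∈ U.filter (fun b => ¬ G.Adj i b) := Finset.mem_filter.mpr ⟨haU, hai⟩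
      have hs1 : 1 ≤ s := Finset.card_pos.mpr ⟨a, haF⟩
      have hCQ : C ⊆ Q := hQZ a haU hai
      have e1 : ((U.erase a).filter (fun b => G.Adj i b)).card = r := by
        rw [Finset.filter_erase, Finset.erase_eq_of_notMem (by simp [hai])]
      have e2 : ((U.erase a).filter (fun b => ¬ G.Adj i b)).card = s - 1 := by
        rw [Finset.filter_erase, Finset.card_erase_of_mem haF]
      have hIH : ∀ y ∈ C, (cnt G χ (U.erase a) (Function.update ψ a y) : ℝ) ≤
          ((P.card : ℝ) / ((r : ℕ) : ℝ)) ^ r *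
          (((Q \ C).card : ℝ) / ((s - 1 : ℕ) : ℝ)) ^ (s - 1) := by
        intro y hy
        have := ih (U.erase a) P (Q \ C) (Function.update ψ a y)
          (by rw [Finset.card_erase_of_mem haU, hcard]; rfl)
          (fun h => hiU (Finset.mem_of_mem_erase h))
          (fun a' ha' hadj' => fun y' hy' =>
            hPB a' (Finset.mem_of_mem_erase ha') hadj'
              (cand_update_subset G χ haU ψ y a' hy'))
          (fun a' ha' hadj' => by
            intro y' hy'
            refine Finset.mem_sdiff.mpr ⟨?_, ?_⟩
            · exact hQZ a' (Finset.mem_of_mem_erase ha') hadj'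
                (cand_update_subset G χ haU ψ y a' hy')
            · exact cand_update_disjoint G χ haU hu₀U hadj ha' ψ y hy')
        rwa [e1, e2] at this
      have hsum : (cnt G χ U ψ : ℝ) ≤ (C.card : ℝ) *
          (((P.card : ℝ) / ((r : ℕ) : ℝ)) ^ r *
          (((Q \ C).card : ℝ) / ((s - 1 : ℕ) : ℝ)) ^ (s - 1)) := by
        calc (cnt G χ U ψ : ℝ) ≤ ∑ y ∈ C, (cnt G χ (U.erase a) (Function.update ψ a y) : ℝ) := by
              exact_mod_cast h1
          _ ≤ C.card • (((P.card : ℝ) / ((r : ℕ) : ℝ)) ^ r *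
              (((Q \ C).card : ℝ) / ((s - 1 : ℕ) : ℝ)) ^ (s - 1)) := Finset.sum_le_card_nsmul C _ _ hIH
          _ = _ := nsmul_eq_mul _ _
      have hqle : C.card ≤ Q.card := Finset.card_le_card hCQ
      have hQC : ((Q \ C).card : ℝ) = (Q.card : ℝ) - (C.card : ℝ) := by
        rw [Finset.card_sdiff_of_subset hCQ]; push_cast [Nat.cast_sub hqle]; ring
      have hA : (C.card : ℝ) * (((Q \ C).card : ℝ) / ((s - 1 : ℕ) : ℝ)) ^ (s - 1) ≤
          ((Q.card : ℝ) / (s : ℝ)) ^ s := by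
        rw [hQC]
        have h := my_amgm (s - 1) (Q.card : ℝ) (C.card : ℝ) (by positivity) (by exact_mod_cast hqle)
        rw [show ((s - 1 : ℕ) : ℝ) + 1 = (s : ℝ) by
              rw [Nat.cast_sub hs1]; push_cast; ring,
            Nat.sub_add_cancel hs1] at h
        exact h
      calc (cnt G χ U ψ : ℝ) ≤ _ := hsum
        _ = ((P.card : ℝ) / ((r : ℕ) : ℝ)) ^ r *
            ((C.card : ℝ) * (((Q \ C).card : ℝ) / ((s - 1 : ℕ) : ℝ)) ^ (s - 1)) := by ring
        _ ≤ ((P.card : ℝ) / ((r : ℕ) : ℝ)) ^ r * ((Q.card : ℝ) / ((s : ℕ) : ℝ)) ^ s := by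
            apply mul_le_mul_of_nonneg_left hA (by positivity)

end Aux

/-- Lemma partition (a): for a connected rainbow graph `R` on `[k]`,
`d_i(x) ≤ (|B(x)|/deg_R(i))^{deg_R(i)} · ((n − |B(x)|)/(k − deg_R(i) − 1))^{k − deg_R(i) − 1}`. -/
theorem partition_bound_a (k n : ℕ) (hk : 2 ≤ k) (G : SimpleGraph (Fin k)) (hG : G.Connected)
    (χ : Fin n → Fin n → Finset (Fin k)) (hχ : IsSym χ)
    (i : Fin k) (hd1 : 1 ≤ degR G i) (hd2 : degR G i ≤ k - 2) (x : Fin n) :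
    (embCount k n (rainbowOf G) χ i x : ℝ) ≤
      (((Bset χ x).card : ℝ) / (degR G i : ℝ)) ^ (degR G i) *
        (((n : ℝ) - ((Bset χ x).card : ℝ)) / ((k : ℝ) - (degR G i : ℝ) - 1)) ^
          (k - degR G i - 1) := by
  classical
  set d := degR G i with hd
  set U₀ : Finset (Fin k) := Finset.univ.erase i with hU₀
  set ψ₀ : Fin k → Fin n := fun _ => x with hψ₀
  set Q₀ : Finset (Fin n) := Finset.univ.filter (fun y => y ≠ x ∧ χ x y = ∅) with hQ₀
  have hnotU : ∀ u : Fin k, u ∉ U₀ ↔ u = i := by intro u; simp [hU₀]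
  have hiU : i ∉ U₀ := by simp [hU₀]
  have hEq : embCount k n (rainbowOf G) χ i x = cnt G χ U₀ ψ₀ := by
    unfold embCount cnt
    congr 1
    ext φ
    simp only [Finset.mem_filter, Finset.mem_univ, true_and]
    constructor
    · rintro ⟨h1, h2, h3⟩
      exact ⟨h1, fun a ha => by rw [(hnotU a).mp ha]; exact h2, h3⟩
    · rintro ⟨h1, h2, h3⟩
      exact ⟨h1, h2 i ((hnotU i).mpr rfl), h3⟩
  have hPB : ∀ a ∈ U₀, G.Adj i a → cand G χ U₀ ψ₀ a ⊆ Bset χ x := by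
    intro a haU hadj y hy
    simp only [cand, Finset.mem_filter, Finset.mem_univ, true_and] at hy
    obtain ⟨h1, h2⟩ := hy
    have hxy := h2 i ((hnotU i).mpr rfl)
    simp only [hψ₀, rainbowOf, if_pos hadj] at hxy
    simp only [Bset, Finset.mem_filter, Finset.mem_univ, true_and]
    refine ⟨Ne.symm (h1 i ((hnotU i).mpr rfl)), ?_⟩
    rw [hxy]
    exact Finset.insert_ne_empty i {a}
  have hQZ : ∀ a ∈ U₀, ¬ G.Adj i a → cand G χ U₀ ψ₀ a ⊆ Q₀ := by
    intro a haU hadj y hy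
    simp only [cand, Finset.mem_filter, Finset.mem_univ, true_and] at hy
    obtain ⟨h1, h2⟩ := hy
    have hxy := h2 i ((hnotU i).mpr rfl)
    simp only [hψ₀, rainbowOf, if_neg hadj] at hxy
    simp only [hQ₀, Finset.mem_filter, Finset.mem_univ, true_and]
    exact ⟨Ne.symm (h1 i ((hnotU i).mpr rfl)), hxy⟩
  have hrfilter : U₀.filter (fun b => G.Adj i b) = Finset.univ.filter (fun j => G.Adj i j) := by
    rw [hU₀, Finset.filter_erase, Finset.erase_eq_of_notMem (by simp)]
  have hrcard : (U₀.filter (fun b => G.Adj i b)).card = d := by rw [hrfilter]; rfl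
  have hsplit := Finset.card_filter_add_card_filter_not (s := U₀) (p := fun b => G.Adj i b)
  have hU₀card : U₀.card = k - 1 := by
    rw [hU₀, Finset.card_erase_of_mem (Finset.mem_univ i)]; simp
  have hk2 : d + 2 ≤ k := by omega
  have hscard : (U₀.filter (fun b => ¬ G.Adj i b)).card = k - d - 1 := by omega
  have hxB : x ∉ Bset χ x := by simp [Bset]
  have hQeq : Q₀ = (insert x (Bset χ x))ᶜ := by
    ext y; simp only [hQ₀, Bset, Finset.mem_filter, Finset.mem_univ, true_and,
      Finset.mem_compl, Finset.mem_insert, not_or, not_and, not_not]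
    constructor
    · rintro ⟨hy1, hy2⟩; exact ⟨hy1, fun _ => hy2⟩
    · rintro ⟨hy1, hy2⟩; exact ⟨hy1, hy2 hy1⟩
  have hBle : (Bset χ x).card + 1 ≤ n := by
    have := Finset.card_le_univ (insert x (Bset χ x))
    rw [Finset.card_insert_of_notMem hxB] at this
    simpa using this
  have hQcard : (Q₀.card : ℝ) = (n : ℝ) - ((Bset χ x).card : ℝ) - 1 := by
    rw [hQeq, Finset.card_compl, Finset.card_insert_of_notMem hxB]
    rw [Nat.cast_sub (by simpa using hBle)]
    push_cast [Fintype.card_fin]; ring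
  have hkey := key G χ hG i U₀.card U₀ (Bset χ x) Q₀ ψ₀ rfl hiU hPB hQZ
  rw [hrcard, hscard] at hkey
  rw [hEq]
  refine le_trans hkey ?_
  have hcast : ((k - d - 1 : ℕ) : ℝ) = (k : ℝ) - (d : ℝ) - 1 := by
    have h3 : k - d - 1 = k - (d + 1) := by omega
    rw [h3, Nat.cast_sub (by omega)]; push_cast; ring
  rw [hcast]
  have hD : (0 : ℝ) < (k : ℝ) - (d : ℝ) - 1 := by
    have : ((d : ℝ) + 2) ≤ (k : ℝ) := by exact_mod_cast hk2
    linarith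
  apply mul_le_mul_of_nonneg_left ?_ (by positivity)
  apply pow_le_pow_left₀ (div_nonneg (by positivity) hD.le)
  have hnum : (Q₀.card : ℝ) ≤ (n : ℝ) - ((Bset χ x).card : ℝ) := by rw [hQcard]; linarith
  exact div_le_div_of_nonneg_right hnum hD.le
end

section
/- Let R be a connected rainbow graph on vertex set [k] with edge set E, k ≥ 2, viewed as a T-edge-colored complete graph with T = E ∪ {∅}, and let H be an n-vertex T-edge-colored complete graph. Then for every i ∈ [k] and every x ∈ V(H), d_i(x) ≤ (|N_i(x)|/(k−1))^{k−1}. -/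
open Finset Filter

open scoped Classical

noncomputable def EmbSet (k n : ℕ) (G : SimpleGraph (Fin k))
    (χ : Fin n → Fin n → Finset (Fin k)) : Finset (Fin k → Fin n) :=
  (Finset.univ : Finset (Fin k → Fin n)).filter
    (fun φ => Function.Injective φ ∧ ∀ a b : Fin k, a ≠ b → χ (φ a) (φ b) = rainbowOf G a b)

noncomputable def ExtSet (k n : ℕ) (G : SimpleGraph (Fin k))
    (χ : Fin n → Fin n → Finset (Fin k)) (P : Finset (Fin k)) (σ : Fin k → Fin n) :
    Finset (Fin k → Fin n) :=
  (EmbSet k n G χ).filter (fun φ => ∀ a ∈ P, φ a = σ a)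

noncomputable def NSet' (k n : ℕ) (G : SimpleGraph (Fin k))
    (χ : Fin n → Fin n → Finset (Fin k)) (P : Finset (Fin k)) (σ : Fin k → Fin n) :
    Finset (Fin n) :=
  (Finset.univ : Finset (Fin n)).filter
    (fun y => ∃ φ ∈ ExtSet k n G χ P σ, ∃ a, a ∉ P ∧ φ a = y)

lemma mem_ExtSet {k n : ℕ} {G : SimpleGraph (Fin k)} {χ : Fin n → Fin n → Finset (Fin k)}
    {P : Finset (Fin k)} {σ : Fin k → Fin n} {φ : Fin k → Fin n} :
    φ ∈ ExtSet k n G χ P σ ↔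
      (Function.Injective φ ∧ ∀ a b : Fin k, a ≠ b → χ (φ a) (φ b) = rainbowOf G a b) ∧
        ∀ a ∈ P, φ a = σ a := by
  simp [ExtSet, EmbSet, and_assoc]

lemma mem_NSet' {k n : ℕ} {G : SimpleGraph (Fin k)} {χ : Fin n → Fin n → Finset (Fin k)}
    {P : Finset (Fin k)} {σ : Fin k → Fin n} {y : Fin n} :
    y ∈ NSet' k n G χ P σ ↔ ∃ φ ∈ ExtSet k n G χ P σ, ∃ a, a ∉ P ∧ φ a = y := by
  simp [NSet']

lemma crossing_walk {k : ℕ} {G : SimpleGraph (Fin k)} {P : Finset (Fin k)} :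
    ∀ {u v : Fin k}, G.Walk u v → u ∉ P → v ∈ P →
      ∃ a t, a ∈ P ∧ t ∉ P ∧ G.Adj a t := by
  intro u v w
  induction w with
  | nil => intro hu hv; exact absurd hv hu
  | @cons u' v' w' h p ih =>
      intro hu hv
      by_cases hy : v' ∈ P
      · exact ⟨v', u', hy, hu, h.symm⟩
      · exact ih hy hv

lemma crossing_edge {k : ℕ} {G : SimpleGraph (Fin k)} (hG : G.Connected)
    {P : Finset (Fin k)} (hP : P.Nonempty) (hPc : Pᶜ.Nonempty) :
    ∃ a t, a ∈ P ∧ t ∉ P ∧ G.Adj a t := by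
  obtain ⟨v, hv⟩ := hP
  obtain ⟨u, hu⟩ := hPc
  rw [Finset.mem_compl] at hu
  obtain ⟨w⟩ := hG.preconnected u v
  exact crossing_walk w hu hv

lemma amgm_aux (s : ℕ) {v N : ℝ} (hv : 0 ≤ v) (hvN : v ≤ N) :
    v * ((N - v) / (s : ℝ)) ^ s ≤ (N / ((s : ℝ) + 1)) ^ (s + 1) := by
  rcases Nat.eq_zero_or_pos s with hs | hs
  · subst hs; simpa using hvN
  · have hs0 : (s : ℝ) ≠ 0 := (Nat.cast_pos.2 hs).ne'
    have hs1 : (s : ℝ) + 1 ≠ 0 := by positivity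
    set b : ℝ := (N - v) / s with hb
    have hb0 : 0 ≤ b := div_nonneg (by linarith) (by positivity)
    have hw : (1 : ℝ) / ((s : ℝ) + 1) + (s : ℝ) / ((s : ℝ) + 1) = 1 := by
      field_simp
      ring
    have key := Real.geom_mean_le_arith_mean2_weighted
      (by positivity : (0:ℝ) ≤ 1 / ((s:ℝ)+1)) (by positivity : (0:ℝ) ≤ (s:ℝ)/((s:ℝ)+1))
      hv hb0 hw
    have hsum : (1 / ((s:ℝ)+1)) * v + ((s:ℝ)/((s:ℝ)+1)) * b = N / ((s:ℝ)+1) := by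
      rw [hb]; field_simp; ring
    rw [hsum] at key
    have hc0 : 0 ≤ v ^ ((1:ℝ)/((s:ℝ)+1)) * b ^ ((s:ℝ)/((s:ℝ)+1)) := by
      apply mul_nonneg <;> exact Real.rpow_nonneg (by assumption) _
    have hpow := pow_le_pow_left₀ hc0 key (s + 1)
    calc v * b ^ s
        = (v ^ ((1:ℝ)/((s:ℝ)+1)) * b ^ ((s:ℝ)/((s:ℝ)+1))) ^ (s + 1) := by
          rw [mul_pow, ← Real.rpow_natCast (v ^ ((1:ℝ)/((s:ℝ)+1))) (s+1),
            ← Real.rpow_natCast (b ^ ((s:ℝ)/((s:ℝ)+1))) (s+1),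
            ← Real.rpow_mul hv, ← Real.rpow_mul hb0]
          have e1 : (1 / ((s:ℝ)+1)) * ((s+1 : ℕ) : ℝ) = 1 := by push_cast; field_simp
          have e2 : ((s:ℝ) / ((s:ℝ)+1)) * ((s+1 : ℕ) : ℝ) = (s : ℝ) := by
            push_cast; field_simp
          rw [e1, e2, Real.rpow_one, Real.rpow_natCast]
      _ ≤ (N / ((s:ℝ)+1)) ^ (s + 1) := hpow

lemma main_bound {k n : ℕ} (G : SimpleGraph (Fin k)) (hG : G.Connected)
    (χ : Fin n → Fin n → Finset (Fin k)) :
    ∀ (s : ℕ) (P : Finset (Fin k)) (σ : Fin k → Fin n), P.Nonempty → Pᶜ.card = s →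
      ((ExtSet k n G χ P σ).card : ℝ) ≤ (((NSet' k n G χ P σ).card : ℝ) / (s : ℝ)) ^ s := by
  intro s
  induction s with
  | zero =>
      intro P σ hP hPc
      have hPu : ∀ a, a ∈ P := by
        intro a
        by_contra ha
        have h1 : a ∈ Pᶜ := Finset.mem_compl.2 ha
        rw [Finset.card_eq_zero.1 hPc] at h1
        exact absurd h1 (Finset.notMem_empty a)
      have hsub : ExtSet k n G χ P σ ⊆ {σ} := by
        intro φ hφ
        have h2 := (mem_ExtSet.1 hφ).2
        simp only [Finset.mem_singleton]
        funext a
        exact h2 a (hPu a)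
      have := Finset.card_le_card hsub
      simp only [Finset.card_singleton] at this
      simp only [pow_zero]
      exact_mod_cast this
  | succ s ih =>
      intro P σ hP hPc
      by_cases hE : ExtSet k n G χ P σ = ∅
      · rw [hE]
        simp only [Finset.card_empty, Nat.cast_zero]
        positivity
      · have hPcne : Pᶜ.Nonempty := Finset.card_pos.1 (by rw [hPc]; omega)
        obtain ⟨a, t, haP, htP, hadj⟩ := crossing_edge hG hP hPcne
        have hta : t ≠ a := fun h => htP (h ▸ haP)
        set E := ExtSet k n G χ P σ with hEdef
        set NS := NSet' k n G χ P σ with hNSdef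
        set V := E.image (fun φ => φ t) with hVdef
        -- fibers
        have hfib : ∀ w, E.filter (fun φ => φ t = w)
            = ExtSet k n G χ (insert t P) (Function.update σ t w) := by
          intro w
          ext φ
          rw [Finset.mem_filter, hEdef, mem_ExtSet, mem_ExtSet]
          constructor
          · rintro ⟨⟨hemb, hagr⟩, hw⟩
            refine ⟨hemb, fun b hb => ?_⟩
            rcases Finset.mem_insert.1 hb with rfl | hbP
            · rw [hw, Function.update_self]
            · rw [hagr b hbP, Function.update_of_ne (fun h => htP (by rw [← h]; exact hbP)) _ _]
          · rintro ⟨hemb, hagr⟩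
            refine ⟨⟨hemb, fun b hb => ?_⟩, ?_⟩
            · rw [hagr b (Finset.mem_insert_of_mem hb),
                Function.update_of_ne (fun h => htP (by rw [← h]; exact hb)) _ _]
            · rw [hagr t (Finset.mem_insert_self t P), Function.update_self]
        have hVsub : V ⊆ NS := by
          intro w hw
          obtain ⟨φ, hφ, rfl⟩ := Finset.mem_image.1 hw
          exact mem_NSet'.2 ⟨φ, hφ, t, htP, rfl⟩
        -- key disjointness
        have hNw : ∀ w ∈ V, NSet' k n G χ (insert t P) (Function.update σ t w) ⊆ NS \ V := by
          intro w _ y hy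
          obtain ⟨φ, hφ, c, hc, hφc⟩ := mem_NSet'.1 hy
          have hcP : c ∉ P := fun h => hc (Finset.mem_insert_of_mem h)
          have hct : c ≠ t := fun h => hc (h ▸ Finset.mem_insert_self t P)
          have hca : c ≠ a := fun h => hcP (h ▸ haP)
          rw [mem_ExtSet] at hφ
          have hφE : φ ∈ E := by
            rw [hEdef, mem_ExtSet]
            refine ⟨hφ.1, fun b hb => ?_⟩
            rw [hφ.2 b (Finset.mem_insert_of_mem hb),
              Function.update_of_ne (fun h => htP (by rw [← h]; exact hb)) _ _]
          have hφa : φ a = σ a := by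
            rw [hφ.2 a (Finset.mem_insert_of_mem haP),
              Function.update_of_ne (fun h => htP (by rw [← h]; exact haP)) _ _]
          rw [Finset.mem_sdiff]
          refine ⟨mem_NSet'.2 ⟨φ, hφE, c, hcP, hφc⟩, ?_⟩
          intro hyV
          obtain ⟨ψ, hψ, hψt⟩ := Finset.mem_image.1 hyV
          rw [hEdef, mem_ExtSet] at hψ
          have h1 : χ y (σ a) = rainbowOf G t a := by
            rw [← hψt, ← hψ.2 a haP]
            exact hψ.1.2 t a hta
          have h2 : χ y (σ a) = rainbowOf G c a := by
            rw [← hφc, ← hφa]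
            exact hφ.1.2 c a hca
          have h3 : rainbowOf G t a = rainbowOf G c a := by rw [← h1, h2]
          simp only [rainbowOf] at h3
          rw [if_pos hadj.symm] at h3
          by_cases hca2 : G.Adj c a
          · rw [if_pos hca2] at h3
            have ht2 : t ∈ ({c, a} : Finset (Fin k)) := by
              rw [← h3]; simp
            rcases Finset.mem_insert.1 ht2 with h | h
            · exact hct h.symm
            · exact hta (Finset.mem_singleton.1 h)
          · rw [if_neg hca2] at h3
            have ht2 : t ∈ (∅ : Finset (Fin k)) := by
              rw [← h3]; simp
            exact absurd ht2 (Finset.notMem_empty t)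
        have hVN : V.card ≤ NS.card := Finset.card_le_card hVsub
        have hNwcard : ∀ w ∈ V,
            ((NSet' k n G χ (insert t P) (Function.update σ t w)).card : ℝ)
              ≤ (NS.card : ℝ) - (V.card : ℝ) := by
          intro w hw
          have h1 := Finset.card_le_card (hNw w hw)
          rw [Finset.card_sdiff_of_subset hVsub] at h1
          have := Nat.cast_le (α := ℝ) |>.2 h1
          rwa [Nat.cast_sub hVN] at this
        have hins : (insert t P)ᶜ.card = s := by
          rw [Finset.compl_insert, Finset.card_erase_of_mem (Finset.mem_compl.2 htP), hPc]
          omega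
        have hstep : ∀ w ∈ V,
            ((ExtSet k n G χ (insert t P) (Function.update σ t w)).card : ℝ)
              ≤ (((NS.card : ℝ) - (V.card : ℝ)) / (s : ℝ)) ^ s := by
          intro w hw
          refine le_trans (ih (insert t P) (Function.update σ t w)
            ⟨t, Finset.mem_insert_self t P⟩ hins) ?_
          have hnn : (0:ℝ) ≤ ((NSet' k n G χ (insert t P) (Function.update σ t w)).card : ℝ) / (s:ℝ) := by positivity
          apply pow_le_pow_left₀ (by positivity)
          rw [div_eq_mul_inv, div_eq_mul_inv]
          exact mul_le_mul_of_nonneg_right (hNwcard w hw)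
            (by positivity : (0:ℝ) ≤ ((s:ℝ))⁻¹)
        have hcard : E.card = ∑ w ∈ V, (E.filter (fun φ => φ t = w)).card :=
          Finset.card_eq_sum_card_fiberwise (fun φ hφ => Finset.mem_image_of_mem _ hφ)
        calc (E.card : ℝ)
            = ∑ w ∈ V, ((E.filter (fun φ => φ t = w)).card : ℝ) := by
              rw [hcard]; push_cast; rfl
          _ ≤ ∑ w ∈ V, (((NS.card : ℝ) - (V.card : ℝ)) / (s : ℝ)) ^ s := by
              refine Finset.sum_le_sum (fun w hw => ?_)
              rw [hfib w]
              exact hstep w hw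
          _ = (V.card : ℝ) * (((NS.card : ℝ) - (V.card : ℝ)) / (s : ℝ)) ^ s := by
              rw [Finset.sum_const, nsmul_eq_mul]
          _ ≤ ((NS.card : ℝ) / ((s : ℝ) + 1)) ^ (s + 1) := by
              exact amgm_aux s (by positivity) (by exact_mod_cast hVN)
          _ = ((NS.card : ℝ) / ((s + 1 : ℕ) : ℝ)) ^ (s + 1) := by push_cast; ring_nf


set_option maxHeartbeats 1000000 in
/-- Lemma partition (b): for a connected rainbow graph `R` on `[k]`,
`d_i(x) ≤ (|N_i(x)|/(k−1))^{k−1}`. -/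
theorem partition_bound_b (k n : ℕ) (hk : 2 ≤ k) (G : SimpleGraph (Fin k)) (hG : G.Connected)
    (χ : Fin n → Fin n → Finset (Fin k)) (hχ : IsSym χ)
    (i : Fin k) (x : Fin n) :
    (embCount k n (rainbowOf G) χ i x : ℝ) ≤
      (((Nset k n (rainbowOf G) χ i x).card : ℝ) / ((k : ℝ) - 1)) ^ (k - 1) := by
  have h1 : embCount k n (rainbowOf G) χ i x = (ExtSet k n G χ {i} (fun _ => x)).card := by
    rw [embCount]
    refine Finset.card_bij (fun φ _ => φ) ?_ ?_ ?_
    · intro φ hφ'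
      simp only [Finset.mem_filter, Finset.mem_univ, true_and] at hφ'
      refine mem_ExtSet.2 ⟨⟨hφ'.1, hφ'.2.2⟩, ?_⟩
      intro a ha
      rw [Finset.mem_singleton] at ha
      subst ha
      exact hφ'.2.1
    · intro φ1 _ φ2 _ h
      exact h
    · intro φ hφ
      have h := mem_ExtSet.1 hφ
      refine ⟨φ, ?_, rfl⟩
      simp only [Finset.mem_filter, Finset.mem_univ, true_and]
      exact ⟨h.1.1, h.2 i (Finset.mem_singleton_self i), h.1.2⟩
  have h2 : Nset k n (rainbowOf G) χ i x = NSet' k n G χ {i} (fun _ => x) := by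
    ext y
    simp only [Nset, Finset.mem_filter, Finset.mem_univ, true_and]
    constructor
    · rintro ⟨hyx, φ, hinj, hφi, hcol, c, hφc⟩
      refine mem_NSet'.2 ⟨φ, mem_ExtSet.2 ⟨⟨hinj, hcol⟩, ?_⟩, c, ?_, hφc⟩
      · intro a ha
        rw [Finset.mem_singleton] at ha
        subst ha
        exact hφi
      · rw [Finset.mem_singleton]
        intro h
        exact hyx (by rw [← hφc, h, hφi])
    · intro hy
      obtain ⟨φ, hφ, c, hc, hφc⟩ := mem_NSet'.1 hy
      rw [mem_ExtSet] at hφ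
      have hφi : φ i = x := hφ.2 i (Finset.mem_singleton_self i)
      have hci : c ≠ i := by simpa [Finset.mem_singleton] using hc
      refine ⟨?_, φ, hφ.1.1, hφi, hφ.1.2, c, hφc⟩
      intro h
      exact hci (hφ.1.1 (by rw [hφc, hφi, h]))
  have hs : ({i} : Finset (Fin k))ᶜ.card = k - 1 := by
    rw [Finset.card_compl, Finset.card_singleton, Fintype.card_fin]
  have hmain := main_bound G hG χ (k - 1) {i} (fun _ => x)
    ⟨i, Finset.mem_singleton_self i⟩ hs
  have hcast : ((k - 1 : ℕ) : ℝ) = (k : ℝ) - 1 := by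
    rw [Nat.cast_sub (by omega : 1 ≤ k), Nat.cast_one]
  rw [h1, h2, ← hcast]
  exact hmain
end

section
/- Let R be a connected rainbow graph on vertex set [k] with edge set E, k ≥ 3, viewed as a T-edge-colored complete graph with T = E ∪ {∅}, and let H be an n-vertex T-edge-colored complete graph with coloring χ_H. Then for every edge ij ∈ E and every x ∈ V(H), d_i(x) ≤ d_{{i,j}}(x) · ((n − d_{{i,j}}(x))/(k−2))^{k−2}, where d_{{i,j}}(x) is the number of vertices y ≠ x with χ_H(xy) = {i,j}. -/
open Finset Filter

open scoped Classical

/-!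
Count the embeddings pinned at `x` by placing the pattern vertices one at a time, each next to
an already placed vertex `s`. A vertex `r` still to be placed must go to a host vertex with the
right colors towards everything placed so far, one of its candidates. If `s` is placed and
adjacent to `r`, no candidate of another unplaced vertex `r'` is a candidate of `r`, because
`R s r' ≠ R s r`. So placing `r` at one of its `c` candidates shrinks the pool (the union of all
candidate sets, of size `m`) to at most `m - c`, and induction together with AM-GM,
`c ((m - c) / (q - 1)) ^ (q - 1) ≤ (m / q) ^ q`, bounds the number of extensions with `q`
vertices left by `(m / q) ^ q`. Placing `j` next to `i` first gives the factor `d_{ij}(x)`, and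
afterwards the pool avoids the `{i,j}`-neighbours of `x`, which gives `n - d_{ij}(x)`.
-/

open Function

def IsRainbowAlong {α C : Type*} (G : SimpleGraph α) (R : α → α → C) : Prop :=
  ∀ s r, G.Adj s r → ∀ r', R s r' = R s r → r' = r

theorem SimpleGraph.Preconnected.exists_adj_notMem_mem {V : Type*} {G : SimpleGraph V}
    (hG : G.Preconnected) {S : Set V} {a b : V} (ha : a ∈ S) (hb : b ∉ S) :
    ∃ s ∉ S, ∃ r ∈ S, G.Adj s r := by
  obtain ⟨d, -, hd₁, hd₂⟩ := (hG b a).some.exists_boundary_dart Sᶜ hb (not_not.2 ha)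
  exact ⟨d.fst, hd₁, d.snd, not_not.1 hd₂, d.adj⟩

theorem mul_div_pow_le_div_pow_succ {c m : ℝ} (hc : 0 ≤ c) (hcm : c ≤ m) (p : ℕ) :
    c * ((m - c) / p) ^ p ≤ (m / (p + 1)) ^ (p + 1) := by
  rcases Nat.eq_zero_or_pos p with rfl | hp
  · simpa using hcm
  set y := (m - c) / p
  have hy : 0 ≤ y := div_nonneg (by linarith) p.cast_nonneg
  have hq : (0 : ℝ) < p + 1 := by positivity
  have hpy : (p : ℝ) * y = m - c := mul_div_cancel₀ _ (by positivity)
  have hmean : 1 / (p + 1 : ℝ) * c + p / (p + 1) * y = m / (p + 1) := by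
    field_simp
    linarith
  have hamgm : c ^ (1 / (p + 1 : ℝ)) * y ^ (p / (p + 1 : ℝ)) ≤ m / (p + 1) :=
    hmean ▸ Real.geom_mean_le_arith_mean2_weighted (by positivity) (by positivity) hc hy
      (by field_simp; ring)
  calc c * y ^ p = (c ^ (1 / (p + 1 : ℝ)) * y ^ (p / (p + 1 : ℝ))) ^ (p + 1) := by
        rw [← Real.rpow_natCast _ (p + 1), Real.mul_rpow (by positivity) (by positivity),
          ← Real.rpow_mul hc, ← Real.rpow_mul hy]
        push_cast
        rw [one_div_mul_cancel hq.ne', div_mul_cancel₀ _ hq.ne', Real.rpow_one,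
          Real.rpow_natCast]
    _ ≤ (m / (p + 1)) ^ (p + 1) := by gcongr

section Extensions

variable {α V C : Type*} [Fintype α] [DecidableEq α] [Fintype V]

noncomputable def extensions (R : α → α → C) (χ : V → V → C) (A : Finset α) (h : α → V) :
    Finset (α → V) :=
  univ.filter fun φ => Injective φ ∧ (∀ a ∉ A, φ a = h a) ∧
    ∀ a b, a ≠ b → χ (φ a) (φ b) = R a b

noncomputable def candidates (R : α → α → C) (χ : V → V → C) (A : Finset α) (h : α → V)
    (r : α) : Finset V :=
  univ.filter fun w => ∀ s ∉ A, χ (h s) w = R s r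

variable {R : α → α → C} {χ : V → V → C} {A : Finset α} {h : α → V}

theorem mem_extensions {φ : α → V} :
    φ ∈ extensions R χ A h ↔
      Injective φ ∧ (∀ a ∉ A, φ a = h a) ∧ ∀ a b, a ≠ b → χ (φ a) (φ b) = R a b := by
  simp [extensions]

theorem mem_candidates {r : α} {w : V} :
    w ∈ candidates R χ A h r ↔ ∀ s ∉ A, χ (h s) w = R s r := by
  simp [candidates]

theorem card_extensions_empty_le_one (h : α → V) : #(extensions R χ ∅ h) ≤ 1 :=
  card_le_one.2 fun _ hφ _ hψ => funext fun a =>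
    ((mem_extensions.1 hφ).2.1 a (notMem_empty a)).trans
      ((mem_extensions.1 hψ).2.1 a (notMem_empty a)).symm

theorem extensions_subset_biUnion {r : α} (hr : r ∈ A) :
    extensions R χ A h ⊆
      (candidates R χ A h r).biUnion fun w => extensions R χ (A.erase r) (update h r w) := by
  intro φ hφ
  obtain ⟨hinj, hext, hcol⟩ := mem_extensions.1 hφ
  refine mem_biUnion.2 ⟨φ r, mem_candidates.2 fun s hs => ?_, mem_extensions.2 ⟨hinj, ?_, hcol⟩⟩
  · rw [← hext s hs]
    exact hcol s r (ne_of_mem_of_not_mem hr hs).symm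
  · intro a ha
    rcases eq_or_ne a r with rfl | har
    · simp
    · rw [update_of_ne har]
      exact hext a fun haA => ha (mem_erase.2 ⟨har, haA⟩)

theorem card_extensions_le_sum {r : α} (hr : r ∈ A) :
    #(extensions R χ A h) ≤
      ∑ w ∈ candidates R χ A h r, #(extensions R χ (A.erase r) (update h r w)) :=
  (card_le_card (extensions_subset_biUnion hr)).trans card_biUnion_le

variable [DecidableEq V]

noncomputable def candidatePool (R : α → α → C) (χ : V → V → C) (A : Finset α) (h : α → V) :
    Finset V :=
  A.biUnion (candidates R χ A h)

theorem candidatePool_erase_subset {r s : α} (hr : r ∈ A) (hs : s ∉ A)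
    (hsr : ∀ r', R s r' = R s r → r' = r) (w : V) :
    candidatePool R χ (A.erase r) (update h r w) ⊆
      candidatePool R χ A h \ candidates R χ A h r := by
  intro u hu
  obtain ⟨r', hr', hu⟩ := mem_biUnion.1 hu
  obtain ⟨hr'r, hr'A⟩ := mem_erase.1 hr'
  have hcol : ∀ t ∉ A, χ (h t) u = R t r' := fun t ht => by
    have htr : t ≠ r := ne_of_mem_of_not_mem hr ht |>.symm
    simpa [update_of_ne htr] using
      mem_candidates.1 hu t fun h' => ht (mem_of_mem_erase h')
  refine mem_sdiff.2 ⟨mem_biUnion.2 ⟨r', hr'A, mem_candidates.2 hcol⟩, fun hur => hr'r ?_⟩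
  exact hsr r' ((hcol s hs).symm.trans (mem_candidates.1 hur s hs))

theorem card_extensions_le {G : SimpleGraph α} (hG : G.Preconnected)
    (hR : IsRainbowAlong G R) (A : Finset α) (hA : ∃ s, s ∉ A)
    (h : α → V) :
    (#(extensions R χ A h) : ℝ) ≤ ((#(candidatePool R χ A h) : ℝ) / #A) ^ #A := by
  induction A using Finset.strongInduction generalizing h with
  | H A ih =>
  obtain rfl | ⟨a, ha⟩ := A.eq_empty_or_nonempty
  · simpa using card_extensions_empty_le_one (R := R) (χ := χ) h
  obtain ⟨b, hb⟩ := hA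
  obtain ⟨s, hs, r, hr, hsr⟩ := hG.exists_adj_notMem_mem (S := (A : Set α)) ha hb
  obtain ⟨p, hp⟩ : ∃ p, #A = p + 1 := ⟨_, (Nat.succ_pred_eq_of_pos (card_pos.2 ⟨a, ha⟩)).symm⟩
  set m := #(candidatePool R χ A h)
  set c := #(candidates R χ A h r)
  have hcm : c ≤ m := card_le_card (subset_biUnion_of_mem _ hr)
  have hterm : ∀ w, (#(extensions R χ (A.erase r) (update h r w)) : ℝ) ≤ ((m - c) / p) ^ p := by
    intro w
    have hpool : #(candidatePool R χ (A.erase r) (update h r w)) ≤ m - c :=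
      (card_le_card (candidatePool_erase_subset hr hs (hR s r hsr) w)).trans
        (card_sdiff_of_subset (subset_biUnion_of_mem _ hr)).le
    calc _ ≤ _ := ih _ (erase_ssubset hr) ⟨s, fun h' => hs (mem_of_mem_erase h')⟩ _
      _ ≤ ((m - c) / p) ^ p := by
        rw [card_erase_of_mem hr, hp, Nat.add_sub_cancel, ← Nat.cast_sub hcm]
        gcongr
  calc (#(extensions R χ A h) : ℝ)
      ≤ ∑ w ∈ candidates R χ A h r, (#(extensions R χ (A.erase r) (update h r w)) : ℝ) := by
        exact_mod_cast card_extensions_le_sum (R := R) (χ := χ) (h := h) hr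
    _ ≤ c * ((m - c) / p) ^ p := by
        simpa using sum_le_sum fun w _ => hterm w
    _ ≤ (m / (p + 1)) ^ (p + 1) :=
        mul_div_pow_le_div_pow_succ c.cast_nonneg (by exact_mod_cast hcm) p
    _ = (m / #A) ^ #A := by rw [hp]; push_cast; rfl

theorem mem_biUnion_extensions_of_pinned {i j : α} (hij : i ≠ j) {x : V} {φ : α → V}
    (hinj : Injective φ) (hix : φ i = x) (hcol : ∀ a b, a ≠ b → χ (φ a) (φ b) = R a b) :
    φ ∈ (univ.filter fun y => y ≠ x ∧ χ x y = R i j).biUnion fun w =>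
      extensions R χ ((univ.erase i).erase j) (update (fun _ => x) j w) := by
  refine mem_biUnion.2 ⟨φ j, mem_filter.2 ⟨mem_univ _, ?_, ?_⟩, mem_extensions.2 ⟨hinj, ?_, hcol⟩⟩
  · exact hix ▸ hinj.ne hij.symm
  · exact hix ▸ hcol i j hij
  · intro a ha
    rcases eq_or_ne a j with rfl | haj
    · simp
    · obtain rfl : a = i := by
        by_contra hai
        exact ha (mem_erase.2 ⟨haj, mem_erase.2 ⟨hai, mem_univ a⟩⟩)
      simp [haj, hix]

theorem candidatePool_pinned_subset {i j : α} (hij : i ≠ j) (hR : ∀ r, R i r = R i j → r = j)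
    (x w : V) :
    candidatePool R χ ((univ.erase i).erase j) (update (fun _ => x) j w) ⊆
      (univ.filter fun y => y ≠ x ∧ χ x y = R i j)ᶜ := by
  intro u hu
  obtain ⟨r, hr, hu⟩ := mem_biUnion.1 hu
  have hχu : χ x u = R i r := by
    simpa [hij] using mem_candidates.1 hu i fun hi => notMem_erase i _ (mem_of_mem_erase hi)
  exact mem_compl.2 fun huD => (mem_erase.1 hr).1 (hR r (hχu.symm.trans (mem_filter.1 huD).2.2))

theorem card_extensions_pinned_le {G : SimpleGraph α} (hG : G.Preconnected)
    (hR : IsRainbowAlong G R) {i j : α} (hij : G.Adj i j) (x w : V) :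
    (#(extensions R χ ((univ.erase i).erase j) (update (fun _ => x) j w)) : ℝ) ≤
      ((Fintype.card V - #(univ.filter fun y => y ≠ x ∧ χ x y = R i j) : ℝ) /
        (Fintype.card α - 2)) ^ (Fintype.card α - 2) := by
  set D := univ.filter fun y => y ≠ x ∧ χ x y = R i j
  set A := (univ.erase i).erase j
  have hA : #A = Fintype.card α - 2 := by
    rw [card_erase_of_mem (mem_erase.2 ⟨hij.ne', mem_univ j⟩), card_erase_of_mem (mem_univ i),
      card_univ, Nat.sub_sub]
  have hα : 2 ≤ Fintype.card α := Fintype.one_lt_card_iff.2 ⟨i, j, hij.ne⟩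
  have hpool : #(candidatePool R χ A (update (fun _ => x) j w)) ≤ Fintype.card V - #D :=
    (card_le_card (candidatePool_pinned_subset hij.ne (hR i j hij) x w)).trans (card_compl D).le
  calc _ ≤ _ := card_extensions_le hG hR A ⟨i, fun hi => notMem_erase i _ (mem_of_mem_erase hi)⟩ _
    _ ≤ (((Fintype.card V - #D : ℕ) : ℝ) / (Fintype.card α - 2 : ℕ)) ^ (Fintype.card α - 2) := by
      rw [hA]
      gcongr
    _ = _ := by push_cast [Nat.cast_sub hα, Nat.cast_sub (card_le_univ D)]; rfl

end Extensions

theorem embCount_le_colorDeg_mul {k n : ℕ} {T : Type} {R : Fin k → Fin k → T}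
    {G : SimpleGraph (Fin k)} (hG : G.Preconnected) (hR : IsRainbowAlong G R)
    (χ : Fin n → Fin n → T) {i j : Fin k} (hij : G.Adj i j) (x : Fin n) :
    (embCount k n R χ i x : ℝ) ≤
      colorDeg χ x (R i j) * ((n - colorDeg χ x (R i j) : ℝ) / (k - 2)) ^ (k - 2) := by
  have hcard : embCount k n R χ i x ≤ ∑ w ∈ univ.filter (fun y => y ≠ x ∧ χ x y = R i j),
      #(extensions R χ ((univ.erase i).erase j) (update (fun _ => x) j w)) :=
    (card_le_card fun φ hφ => by
      obtain ⟨hinj, hix, hcol⟩ := (mem_filter.1 hφ).2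
      exact mem_biUnion_extensions_of_pinned hij.ne hinj hix hcol).trans card_biUnion_le
  calc (embCount k n R χ i x : ℝ) ≤ _ := by exact_mod_cast hcard
    _ ≤ _ := sum_le_sum fun w _ => card_extensions_pinned_le hG hR hij x w
    _ = _ := by simp [colorDeg]

theorem isRainbowAlong_rainbowOf {k : ℕ} (G : SimpleGraph (Fin k)) :
    IsRainbowAlong G (rainbowOf G) := by
  intro s r hsr r' h
  unfold rainbowOf at h
  rw [if_pos hsr] at h
  split_ifs at h
  · have : r ∈ ({s, r'} : Finset (Fin k)) := h ▸ by simp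
    exact (by simpa [hsr.ne'] using this : r = r').symm
  · exact absurd h.symm (insert_ne_empty _ _)

theorem partition_bound_c_general (k n : ℕ) (G : SimpleGraph (Fin k)) (hG : G.Connected)
    (χ : Fin n → Fin n → Finset (Fin k))
    (i j : Fin k) (hij : G.Adj i j) (x : Fin n) :
    (embCount k n (rainbowOf G) χ i x : ℝ) ≤
      (colorDeg χ x ({i, j} : Finset (Fin k)) : ℝ) *
        (((n : ℝ) - (colorDeg χ x ({i, j} : Finset (Fin k)) : ℝ)) / ((k : ℝ) - 2)) ^ (k - 2) := by
  have h := embCount_le_colorDeg_mul hG.preconnected (isRainbowAlong_rainbowOf G) χ hij x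
  rwa [show rainbowOf G i j = {i, j} from if_pos hij] at h

/-- Lemma partition (c): for a connected rainbow graph `R` on `[k]` and an edge
`ij ∈ E`, `d_i(x) ≤ d_{{i,j}}(x) · ((n − d_{{i,j}}(x))/(k−2))^{k−2}`. -/
theorem partition_bound_c (k n : ℕ) (hk : 3 ≤ k) (G : SimpleGraph (Fin k)) (hG : G.Connected)
    (χ : Fin n → Fin n → Finset (Fin k)) (hχ : IsSym χ)
    (i j : Fin k) (hij : G.Adj i j) (x : Fin n) :
    (embCount k n (rainbowOf G) χ i x : ℝ) ≤
      (colorDeg χ x ({i, j} : Finset (Fin k)) : ℝ) *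
        (((n : ℝ) - (colorDeg χ x ({i, j} : Finset (Fin k)) : ℝ)) / ((k : ℝ) - 2)) ^ (k - 2) :=
  partition_bound_c_general k n G hG χ i j hij x
end
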